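/- arXiv:1703.08515 — 7 statements merged into one kernel-verified Lean document; each statement's English description precedes it below -/
import Mathlib

section
/- Let G = (V,E) be a strongly connected directed graph on M vertices and let x^d ∈ P(V) have strongly connected support. Then there exists a matrix Q ∈ ℝ^{M×M} satisfying Q^{ij} ≥ 0 for all i ≠ j, Q^{ij} = 0 whenever i ≠ j and (i,j) ∉ E, and Σ_{j=1}^M Q^{ij} = 0 for every i, together with constants C > 0 and λ > 0, such that for every x^0 ∈ P(V) and every t ≥ 0 one has ‖exp(t Q^T) x^0 − x^d‖ ≤ C e^{−λ t} (so in particular the constant-rate Kolmogorov forward equation ẋ = Q^T x, whose solution is x(t) = exp(t Q^T) x^0, converges exponentially to x^d from every initial distribution). -/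
/-!
Every edge of the support of `x^d` lies on a closed walk inside the support, and summing these
walks gives a circulation `w` that is positive exactly on the support edges. The rates
`q i j = w i j / x^d_i` on the support, and rate `1` on every other edge of `E`, make `x^d`
stationary (`x^d Q = 0` is the conservation law of `w`) and let every state reach a fixed state
`s` of the support. The stochastic matrix `exp Q` then has a positive column `s`, so by Doeblin's
argument it contracts zero-sum row vectors in `ℓ¹` by a factor `1 - ε`. As `exp (t Q)` is
stochastic for every `t ≥ 0`, `(x^0 - x^d) exp (t Q)` decays exponentially, and the Euclidean
norm is bounded by the `ℓ¹` norm.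
-/

open Matrix Filter

noncomputable section

/-- The probability simplex `P(V)` in `ℝ^M`. -/
def probSimplex (M : ℕ) : Set (Fin M → ℝ) :=
  {x | (∀ i, 0 ≤ x i) ∧ ∑ i, x i = 1}

/-- Euclidean norm on `ℝ^M`. -/
def euclNorm {M : ℕ} (v : Fin M → ℝ) : ℝ :=
  Real.sqrt (∑ i, (v i) ^ 2)

open NormedSpace Finset Relation

section Flow

variable {α : Type*}

def IsFlowOn (r : α → α → Prop) (f : α → α → ℝ) : Prop :=
  ∀ x y, 0 ≤ f x y ∧ (r x y ∨ f x y = 0)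

variable {r : α → α → Prop} {f g : α → α → ℝ}

theorem isFlowOn_zero : IsFlowOn r 0 := fun _ _ => ⟨le_rfl, Or.inr rfl⟩

theorem IsFlowOn.add (hf : IsFlowOn r f) (hg : IsFlowOn r g) : IsFlowOn r (f + g) := by
  intro x y
  obtain ⟨hf0, hfr⟩ := hf x y
  obtain ⟨hg0, hgr⟩ := hg x y
  refine ⟨add_nonneg hf0 hg0, ?_⟩
  by_cases h : r x y
  · exact Or.inl h
  · simp [hfr.resolve_left h, hgr.resolve_left h]

theorem IsFlowOn.sum {ι : Type*} (s : Finset ι) {f : ι → α → α → ℝ}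
    (hf : ∀ e ∈ s, IsFlowOn r (f e)) : IsFlowOn r (∑ e ∈ s, f e) := by
  classical
  induction s using Finset.induction_on with
  | empty => exact isFlowOn_zero
  | insert e s he ih =>
    rw [sum_insert he]
    exact (hf e (mem_insert_self e s)).add (ih fun e' he' => hf e' (mem_insert_of_mem he'))

def edgeFlow [DecidableEq α] (a b : α) : α → α → ℝ := fun x y => if x = a ∧ y = b then 1 else 0

theorem isFlowOn_edgeFlow [DecidableEq α] {a b : α} (hab : r a b) :
    IsFlowOn r (edgeFlow a b) := by
  intro x y
  unfold edgeFlow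
  split_ifs with h
  · exact ⟨zero_le_one, Or.inl (h.1 ▸ h.2 ▸ hab)⟩
  · exact ⟨le_rfl, Or.inr rfl⟩

variable [Fintype α]

def netInflow (f : α → α → ℝ) (j : α) : ℝ := ∑ x, f x j - ∑ y, f j y

theorem netInflow_add (f g : α → α → ℝ) (j : α) :
    netInflow (f + g) j = netInflow f j + netInflow g j := by
  simp only [netInflow, Pi.add_apply, sum_add_distrib]
  ring

theorem netInflow_sum {ι : Type*} (s : Finset ι) (f : ι → α → α → ℝ) (j : α) :
    netInflow (∑ e ∈ s, f e) j = ∑ e ∈ s, netInflow (f e) j := by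
  simp only [netInflow, Finset.sum_apply, sum_sub_distrib]
  rw [Finset.sum_comm (s := univ), Finset.sum_comm (s := univ) (t := s)]

variable [DecidableEq α]

theorem netInflow_edgeFlow (a b j : α) :
    netInflow (edgeFlow a b) j = (if j = b then 1 else 0) - (if j = a then 1 else 0) := by
  simp [netInflow, edgeFlow, ite_and]

theorem exists_path_flow {a b : α} (h : ReflTransGen r a b) :
    ∃ f, IsFlowOn r f ∧
      ∀ j, netInflow f j = (if j = b then 1 else 0) - (if j = a then 1 else 0) := by
  induction h with
  | refl => exact ⟨0, isFlowOn_zero, fun j => by simp [netInflow]⟩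
  | @tail b c _ hbc ih =>
    obtain ⟨f, hf, hf_in⟩ := ih
    refine ⟨f + edgeFlow b c, hf.add (isFlowOn_edgeFlow hbc), fun j => ?_⟩
    rw [netInflow_add, hf_in, netInflow_edgeFlow]
    ring

theorem exists_circulation_through (hr : ∀ a b, r a b → ReflTransGen r b a) {a b : α}
    (hab : r a b) : ∃ f, IsFlowOn r f ∧ (∀ j, netInflow f j = 0) ∧ 0 < f a b := by
  obtain ⟨f, hf, hf_in⟩ := exists_path_flow (hr a b hab)
  refine ⟨f + edgeFlow a b, hf.add (isFlowOn_edgeFlow hab), fun j => ?_, ?_⟩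
  · rw [netInflow_add, hf_in, netInflow_edgeFlow]
    ring
  · simpa [edgeFlow] using add_pos_of_nonneg_of_pos (hf a b).1 zero_lt_one

theorem exists_pos_circulation (hr : ∀ a b, r a b → ReflTransGen r b a) :
    ∃ w, IsFlowOn r w ∧ (∀ j, netInflow w j = 0) ∧ ∀ a b, r a b → 0 < w a b := by
  have : ∀ e : α × α, ∃ f, IsFlowOn r f ∧ (∀ j, netInflow f j = 0) ∧
      (r e.1 e.2 → 0 < f e.1 e.2) := by
    intro e
    by_cases he : r e.1 e.2
    · obtain ⟨f, hf, hf_in, hf_pos⟩ := exists_circulation_through hr he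
      exact ⟨f, hf, hf_in, fun _ => hf_pos⟩
    · exact ⟨0, isFlowOn_zero, fun j => by simp [netInflow], fun h => absurd h he⟩
  choose f hf hf_in hf_pos using this
  refine ⟨∑ e, f e, IsFlowOn.sum _ fun e _ => hf e, fun j => ?_, fun a b hab => ?_⟩
  · simp [netInflow_sum, hf_in]
  · rw [Finset.sum_apply, Finset.sum_apply]
    exact (hf_pos (a, b) hab).trans_le
      (single_le_sum (f := fun e => f e a b) (fun e _ => (hf e a b).1) (mem_univ (a, b)))

end Flow

section MatrixExp

variable {n : Type*} [Fintype n] [DecidableEq n]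

open scoped Matrix.Norms.Operator in
theorem hasSum_map_exp (A : Matrix n n ℝ) {F : Type*} [AddCommGroup F] [Module ℝ F]
    [TopologicalSpace F] [IsTopologicalAddGroup F] [ContinuousSMul ℝ F]
    (L : Matrix n n ℝ →ₗ[ℝ] F) :
    HasSum (fun k : ℕ => (k.factorial⁻¹ : ℝ) • L (A ^ k)) (L (exp A)) := by
  have := (exp_series_hasSum_exp' (𝕂 := ℝ) A).map L L.continuous_of_finiteDimensional
  simp only [Function.comp_def, map_smul] at this
  exact this

theorem hasSum_exp_apply (A : Matrix n n ℝ) (i j : n) :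
    HasSum (fun k : ℕ => (k.factorial⁻¹ : ℝ) * (A ^ k) i j) (exp A i j) :=
  hasSum_map_exp A (entryLinearMap ℝ ℝ i j)

theorem exp_mulVec_of_mulVec_eq_zero {A : Matrix n n ℝ} {v : n → ℝ} (h : A *ᵥ v = 0) :
    exp A *ᵥ v = v := by
  have hsum := hasSum_map_exp A ((LinearMap.applyₗ v).comp toLin'.toLinearMap)
  simp only [LinearMap.comp_apply, LinearEquiv.coe_coe, toLin'_apply,
    LinearMap.applyₗ_apply_apply] at hsum
  have hsingle : HasSum (fun k : ℕ => (k.factorial⁻¹ : ℝ) • (A ^ k *ᵥ v)) v := by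
    convert hasSum_single (f := fun k : ℕ => (k.factorial⁻¹ : ℝ) • (A ^ k *ᵥ v)) 0 fun k hk => ?_
    · simp
    obtain ⟨k, rfl⟩ := Nat.exists_eq_succ_of_ne_zero hk
    rw [pow_succ, ← mulVec_mulVec, h, mulVec_zero, smul_zero]
  exact hsum.unique hsingle

theorem vecMul_exp_of_vecMul_eq_zero {A : Matrix n n ℝ} {v : n → ℝ} (h : v ᵥ* A = 0) :
    v ᵥ* exp A = v := by
  rw [← mulVec_transpose, ← exp_transpose]
  exact exp_mulVec_of_mulVec_eq_zero (by rwa [mulVec_transpose])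

theorem exp_apply_nonneg {A : Matrix n n ℝ} (hA : ∀ i j, 0 ≤ A i j) (i j : n) :
    0 ≤ exp A i j :=
  (hasSum_exp_apply A i j).nonneg fun k => mul_nonneg (by positivity) (pow_apply_nonneg hA k i j)

theorem exists_pow_apply_pos {A : Matrix n n ℝ} (hA : ∀ i j, 0 ≤ A i j) {i j : n}
    (h : ReflTransGen (fun a b => 0 < A a b) i j) : ∃ k, 0 < (A ^ k) i j := by
  induction h with
  | refl => exact ⟨0, by simp⟩
  | @tail b c _ hbc ih =>
    obtain ⟨k, hk⟩ := ih
    refine ⟨k + 1, ?_⟩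
    rw [pow_succ, mul_apply]
    exact (mul_pos hk hbc).trans_le <| single_le_sum (f := fun l => (A ^ k) i l * A l c)
      (fun l _ => mul_nonneg (pow_apply_nonneg hA k i l) (hA l c)) (mem_univ b)

theorem exp_apply_pos {A : Matrix n n ℝ} (hA : ∀ i j, 0 ≤ A i j) {i j : n}
    (h : ReflTransGen (fun a b => 0 < A a b) i j) : 0 < exp A i j := by
  obtain ⟨k, hk⟩ := exists_pow_apply_pos hA h
  exact (mul_pos (by positivity) hk).trans_le <| le_hasSum (hasSum_exp_apply A i j) k
    fun l _ => mul_nonneg (by positivity) (pow_apply_nonneg hA l i j)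

theorem exp_sub_smul_one (A : Matrix n n ℝ) (c : ℝ) :
    exp (A - c • 1) = Real.exp (-c) • exp A := by
  have hc : exp (-c • (1 : Matrix n n ℝ)) = Real.exp (-c) • 1 := by
    rw [smul_one_eq_diagonal, exp_diagonal, smul_one_eq_diagonal, Pi.exp_def, Real.exp_eq_exp_ℝ]
  rw [sub_eq_neg_add, ← neg_smul, exp_add_of_commute _ _ ((Commute.one_left A).smul_left _), hc,
    smul_one_mul]

end MatrixExp

section Doeblin

variable {n : Type*} [Fintype n] {P : Matrix n n ℝ}

theorem sum_abs_vecMul_le (hP : ∀ i j, 0 ≤ P i j) {c : ℝ} (hc : ∀ i, ∑ j, P i j ≤ c)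
    (v : n → ℝ) : ∑ j, |(v ᵥ* P) j| ≤ c * ∑ i, |v i| :=
  calc ∑ j, |(v ᵥ* P) j| ≤ ∑ j, ∑ i, |v i| * P i j := by
        refine sum_le_sum fun j _ => (abs_sum_le_sum_abs _ _).trans_eq ?_
        simp [abs_mul, abs_of_nonneg (hP _ j)]
    _ = ∑ i, |v i| * ∑ j, P i j := by rw [sum_comm]; simp [mul_sum]
    _ ≤ ∑ i, |v i| * c := sum_le_sum fun i _ => mul_le_mul_of_nonneg_left (hc i) (abs_nonneg _)
    _ = c * ∑ i, |v i| := by rw [mul_sum]; simp [mul_comm]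

variable [DecidableEq n]

theorem sum_vecMul_of_mem_rowStochastic (hP : P ∈ rowStochastic ℝ n) (v : n → ℝ) :
    ∑ j, (v ᵥ* P) j = ∑ i, v i := by
  rw [← dotProduct_one, ← dotProduct_mulVec, hP.2, dotProduct_one]

theorem sum_abs_vecMul_le_of_le_apply (hP : P ∈ rowStochastic ℝ n) {s : n} {ε : ℝ}
    (hε : ∀ i, ε ≤ P i s) {v : n → ℝ} (hv : ∑ i, v i = 0) :
    ∑ j, |(v ᵥ* P) j| ≤ (1 - ε) * ∑ i, |v i| := by
  -- On zero-sum vectors, removing the mass `ε` that every row puts on column `s` changes nothing.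
  set P' := P - vecMulVec 1 (Pi.single s ε)
  have hvP : v ᵥ* P = v ᵥ* P' := by
    rw [vecMul_sub, vecMul_vecMulVec, dotProduct_one, hv, zero_smul, sub_zero]
  rw [hvP]
  refine sum_abs_vecMul_le (fun i j => ?_) (fun i => ?_) v
  · rcases eq_or_ne j s with rfl | hj
    · simpa [P'] using hε i
    · simpa [P', hj] using hP.1 i j
  · simp [P', sum_sub_distrib, sum_row_of_mem_rowStochastic hP i]

theorem sum_abs_vecMul_pow_le (hP : P ∈ rowStochastic ℝ n) {s : n} {ε : ℝ}
    (hε : ∀ i, ε ≤ P i s) {v : n → ℝ} (hv : ∑ i, v i = 0) (k : ℕ) :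
    ∑ j, |(v ᵥ* P ^ k) j| ≤ (1 - ε) ^ k * ∑ i, |v i| := by
  have hε1 : 0 ≤ 1 - ε := sub_nonneg.2 <| (hε s).trans (le_one_of_mem_rowStochastic hP)
  induction k generalizing v with
  | zero => simp
  | succ k ih =>
    rw [pow_succ', ← vecMul_vecMul, pow_succ, mul_assoc]
    refine (ih (by rwa [sum_vecMul_of_mem_rowStochastic hP])).trans ?_
    exact mul_le_mul_of_nonneg_left (sum_abs_vecMul_le_of_le_apply hP hε hv) (by positivity)

end Doeblin

theorem one_sub_pow_floor_le {ε : ℝ} (hε0 : 0 ≤ ε) (hε1 : ε ≤ 1) (t : ℝ) :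
    (1 - ε) ^ ⌊t⌋₊ ≤ Real.exp ε * Real.exp (-ε * t) :=
  calc (1 - ε) ^ ⌊t⌋₊ ≤ Real.exp (-ε) ^ ⌊t⌋₊ :=
        pow_le_pow_left₀ (by linarith) (by linarith [Real.add_one_le_exp (-ε)]) _
    _ = Real.exp (-ε * ⌊t⌋₊) := by rw [← Real.exp_nat_mul, mul_comm]
    _ ≤ Real.exp (ε + -ε * t) :=
        Real.exp_le_exp.2 (by nlinarith [Nat.lt_floor_add_one t])
    _ = Real.exp ε * Real.exp (-ε * t) := Real.exp_add _ _

section RateMatrix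

variable {n : Type*} [Fintype n] [DecidableEq n] (q : Matrix n n ℝ)

def rateMatrix : Matrix n n ℝ := q - diagonal fun i => ∑ k, q i k

theorem rateMatrix_apply_of_ne {i j : n} (h : i ≠ j) : rateMatrix q i j = q i j := by
  simp [rateMatrix, h]

theorem sum_rateMatrix_row (i : n) : ∑ j, rateMatrix q i j = 0 := by
  simp [rateMatrix, sum_sub_distrib, diagonal_apply]

theorem rateMatrix_mulVec_one : rateMatrix q *ᵥ 1 = 0 := by
  ext i
  simpa [mulVec, dotProduct] using sum_rateMatrix_row q i

theorem vecMul_rateMatrix_apply (x : n → ℝ) (j : n) :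
    (x ᵥ* rateMatrix q) j = netInflow (fun i k => x i * q i k) j := by
  simp [rateMatrix, vecMul, dotProduct, netInflow, mul_sub, sum_sub_distrib, diagonal_apply,
    mul_sum]

theorem exp_smul_rateMatrix (t μ : ℝ) :
    exp (t • rateMatrix q) =
      Real.exp (-(t * μ)) • exp (t • (q + diagonal fun i => μ - ∑ k, q i k)) := by
  rw [← exp_sub_smul_one]
  congr 1
  ext i j
  by_cases h : i = j
  · subst h
    simp only [rateMatrix, Matrix.smul_apply, Matrix.sub_apply, Matrix.add_apply,
      diagonal_apply_eq, one_apply_eq, smul_eq_mul, smul_add, mul_one]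
    ring
  · simp [rateMatrix, h]

variable {q} (hq : ∀ i j, 0 ≤ q i j)
include hq

/-- Uniformization: for `μ` above every exit rate, `rateMatrix q + μ • 1` is entrywise
nonnegative. -/
theorem exists_exp_smul_rateMatrix_eq :
    ∃ (B : Matrix n n ℝ) (μ : ℝ), (∀ i j, q i j ≤ B i j) ∧
      ∀ t, exp (t • rateMatrix q) = Real.exp (-(t * μ)) • exp (t • B) := by
  refine ⟨_, ∑ i, ∑ k, q i k, fun i j => ?_, fun t => exp_smul_rateMatrix q t _⟩
  have hrow : ∑ k, q i k ≤ ∑ i, ∑ k, q i k :=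
    single_le_sum (f := fun i => ∑ k, q i k) (fun i _ => sum_nonneg fun k _ => hq i k)
      (mem_univ i)
  by_cases h : i = j
  · subst h
    simpa using hrow
  · simp [h]

theorem exp_smul_rateMatrix_mem_rowStochastic {t : ℝ} (ht : 0 ≤ t) :
    exp (t • rateMatrix q) ∈ rowStochastic ℝ n := by
  obtain ⟨B, μ, hB, hexp⟩ := exists_exp_smul_rateMatrix_eq hq
  refine ⟨fun i j => ?_, exp_mulVec_of_mulVec_eq_zero ?_⟩
  · rw [hexp, Matrix.smul_apply, smul_eq_mul]
    exact mul_nonneg (Real.exp_pos _).le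
      (exp_apply_nonneg (fun i j => mul_nonneg ht ((hq i j).trans (hB i j))) i j)
  · rw [Matrix.smul_mulVec, rateMatrix_mulVec_one, smul_zero]

theorem exp_rateMatrix_apply_pos {i j : n} (h : ReflTransGen (fun a b => 0 < q a b) i j) :
    0 < exp (rateMatrix q) i j := by
  obtain ⟨B, μ, hB, hexp⟩ := exists_exp_smul_rateMatrix_eq hq
  have h1 := hexp 1
  simp only [one_smul] at h1
  rw [h1, Matrix.smul_apply, smul_eq_mul]
  exact mul_pos (Real.exp_pos _) (exp_apply_pos (fun i j => (hq i j).trans (hB i j))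
    (ReflTransGen.mono (fun a b (hab : 0 < q a b) => hab.trans_le (hB a b)) _ _ h))

theorem exists_sum_abs_vecMul_exp_rateMatrix_le {s : n}
    (hs : ∀ i, ReflTransGen (fun a b => 0 < q a b) i s) :
    ∃ C lam : ℝ, 0 < C ∧ 0 < lam ∧ ∀ v : n → ℝ, ∑ i, v i = 0 → ∀ t : ℝ, 0 ≤ t →
      ∑ j, |(v ᵥ* exp (t • rateMatrix q)) j| ≤ C * Real.exp (-lam * t) * ∑ i, |v i| := by
  set P := exp (rateMatrix q)
  have hP : P ∈ rowStochastic ℝ n := by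
    simpa using exp_smul_rateMatrix_mem_rowStochastic hq zero_le_one
  obtain ⟨i₀, -, hi₀⟩ := exists_min_image univ (fun i => P i s) ⟨s, mem_univ s⟩
  have hε : 0 < P i₀ s := exp_rateMatrix_apply_pos hq (hs i₀)
  refine ⟨Real.exp (P i₀ s), P i₀ s, Real.exp_pos _, hε, fun v hv t ht => ?_⟩
  set k := ⌊t⌋₊
  have hR := exp_smul_rateMatrix_mem_rowStochastic hq (sub_nonneg.2 (Nat.floor_le ht))
  have hsplit : exp (t • rateMatrix q) = P ^ k * exp ((t - k) • rateMatrix q) := by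
    rw [← Matrix.exp_nsmul, ← Nat.cast_smul_eq_nsmul ℝ,
      ← exp_add_of_commute _ _ ((Commute.refl _).smul_left _ |>.smul_right _), ← add_smul,
      add_sub_cancel]
  calc ∑ j, |(v ᵥ* exp (t • rateMatrix q)) j|
      = ∑ j, |((v ᵥ* P ^ k) ᵥ* exp ((t - k) • rateMatrix q)) j| := by
        rw [hsplit, vecMul_vecMul]
    _ ≤ 1 * ∑ j, |(v ᵥ* P ^ k) j| :=
        sum_abs_vecMul_le hR.1 (fun i => (sum_row_of_mem_rowStochastic hR i).le) _
    _ ≤ (1 - P i₀ s) ^ k * ∑ i, |v i| := by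
        rw [one_mul]
        exact sum_abs_vecMul_pow_le hP (fun i => hi₀ i (mem_univ i)) hv k
    _ ≤ Real.exp (P i₀ s) * Real.exp (-P i₀ s * t) * ∑ i, |v i| :=
        mul_le_mul_of_nonneg_right (one_sub_pow_floor_le hε.le (le_one_of_mem_rowStochastic hP) t)
          (sum_nonneg fun _ _ => abs_nonneg _)

end RateMatrix

theorem reflTransGen_of_support {α : Type*} {E : Set (α × α)}
    (hconn : ∀ i j, ReflTransGen (fun a b => (a, b) ∈ E) i j) {x : α → ℝ}
    (hsupp : ∀ i j, 0 < x i → 0 < x j →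
      ReflTransGen (fun a b => (a, b) ∈ E ∧ 0 < x a ∧ 0 < x b) i j)
    {R : α → α → Prop} (hR_supp : ∀ a b, (a, b) ∈ E ∧ 0 < x a ∧ 0 < x b → R a b)
    (hR_out : ∀ a b, (a, b) ∈ E → ¬ 0 < x a → R a b) (i : α) {j : α} (hj : 0 < x j) :
    ReflTransGen R i j := by
  induction hconn i j using ReflTransGen.head_induction_on with
  | refl => exact ReflTransGen.refl
  | @head a c hac _ ih =>
    by_cases ha : 0 < x a
    · exact ReflTransGen.mono hR_supp _ _ (hsupp a j ha hj)
    · exact ReflTransGen.head (hR_out a c hac ha) ih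

theorem exists_rates_of_support {α : Type*} [Fintype α] [DecidableEq α] (E : Set (α × α))
    (hconn : ∀ i j, ReflTransGen (fun a b => (a, b) ∈ E) i j) (x : α → ℝ) (hx : ∀ i, 0 ≤ x i)
    (hsupp : ∀ i j, 0 < x i → 0 < x j →
      ReflTransGen (fun a b => (a, b) ∈ E ∧ 0 < x a ∧ 0 < x b) i j) :
    ∃ q : Matrix α α ℝ, (∀ i j, 0 ≤ q i j) ∧ (∀ i j, (i, j) ∉ E → q i j = 0) ∧
      x ᵥ* rateMatrix q = 0 ∧ ∀ i j, 0 < x j → ReflTransGen (fun a b => 0 < q a b) i j := by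
  classical
  obtain ⟨w, hw, hw_in, hw_pos⟩ := exists_pos_circulation
    (r := fun a b => (a, b) ∈ E ∧ 0 < x a ∧ 0 < x b) fun a b h => hsupp b a h.2.2 h.2.1
  -- On the support, `x i * q i j = w i j`, so `x` is stationary because `w` is a circulation;
  -- off the support, every edge of `E` gets rate `1`, which leads into the support.
  let q : Matrix α α ℝ := of fun i j => if 0 < x i then w i j / x i else if (i, j) ∈ E then 1 else 0
  have hflow : ∀ i j, x i * q i j = w i j := by
    intro i j
    by_cases hi : 0 < x i
    · simp [q, hi, mul_div_cancel₀ _ hi.ne']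
    · rcases (hw i j).2 with h | h
      · exact absurd h.2.1 hi
      · simp [le_antisymm (not_lt.1 hi) (hx i), h]
  refine ⟨q, fun i j => ?_, fun i j hij => ?_, ?_, fun i j hj => ?_⟩
  · by_cases hi : 0 < x i
    · simpa [q, hi] using div_nonneg (hw i j).1 hi.le
    · simp only [q, of_apply, hi, if_false]
      split_ifs <;> norm_num
  · by_cases hi : 0 < x i
    · have : w i j = 0 := (hw i j).2.resolve_left fun h => hij h.1
      simp [q, hi, this]
    · simp [q, hi, hij]
  · ext j
    rw [vecMul_rateMatrix_apply]
    simp only [hflow]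
    exact hw_in j
  · refine reflTransGen_of_support hconn hsupp (fun a b hab => ?_) (fun a b hab ha => ?_) i hj
    · simpa [q, hab.2.1] using div_pos (hw_pos a b hab) hab.2.1
    · simp [q, ha, hab]

theorem euclNorm_le_sum_abs {M : ℕ} (v : Fin M → ℝ) : euclNorm v ≤ ∑ i, |v i| :=
  Real.sqrt_le_iff.2 ⟨sum_nonneg fun i _ => abs_nonneg _,
    by simpa using sum_sq_le_sq_sum_of_nonneg (s := univ) fun i _ => abs_nonneg (v i)⟩

theorem exists_pos_of_mem_probSimplex {M : ℕ} {x : Fin M → ℝ} (hx : x ∈ probSimplex M) :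
    ∃ s, 0 < x s := by
  by_contra! h
  linarith [sum_nonpos fun i (_ : i ∈ univ) => h i, hx.2]

theorem sum_sub_of_mem_probSimplex {M : ℕ} {x y : Fin M → ℝ} (hx : x ∈ probSimplex M)
    (hy : y ∈ probSimplex M) : ∑ i, (x - y) i = 0 := by
  simp [sum_sub_distrib, hx.2, hy.2]

theorem sum_abs_sub_le_two_of_mem_probSimplex {M : ℕ} {x y : Fin M → ℝ} (hx : x ∈ probSimplex M)
    (hy : y ∈ probSimplex M) : ∑ i, |(x - y) i| ≤ 2 :=
  calc ∑ i, |(x - y) i| ≤ ∑ i, (x i + y i) :=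
        sum_le_sum fun i _ => (abs_sub _ _).trans_eq (by rw [abs_of_nonneg (hx.1 i),
          abs_of_nonneg (hy.1 i)])
    _ = 2 := by rw [sum_add_distrib, hx.2, hy.2]; norm_num

theorem stabilization_by_constant_rates_general
    (M : ℕ) (E : Set (Fin M × Fin M))
    (hconn : ∀ i j : Fin M, Relation.ReflTransGen (fun a b => (a, b) ∈ E) i j)
    (xd : Fin M → ℝ) (hxd : xd ∈ probSimplex M)
    (hsupp : ∀ i j : Fin M, 0 < xd i → 0 < xd j →
      Relation.ReflTransGen (fun a b => (a, b) ∈ E ∧ 0 < xd a ∧ 0 < xd b) i j) :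
    ∃ (Q : Matrix (Fin M) (Fin M) ℝ) (C lam : ℝ),
      0 < C ∧ 0 < lam ∧
      (∀ i j, i ≠ j → 0 ≤ Q i j) ∧
      (∀ i j, i ≠ j → (i, j) ∉ E → Q i j = 0) ∧
      (∀ i, ∑ j, Q i j = 0) ∧
      ∀ x0 ∈ probSimplex M, ∀ t : ℝ, 0 ≤ t →
        euclNorm ((NormedSpace.exp (t • Qᵀ)).mulVec x0 - xd) ≤ C * Real.exp (-lam * t) := by
  obtain ⟨q, hq, hqE, hstat, hreach⟩ := exists_rates_of_support E hconn xd hxd.1 hsupp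
  obtain ⟨s, hs⟩ := exists_pos_of_mem_probSimplex hxd
  obtain ⟨C, lam, hC, hlam, hdecay⟩ :=
    exists_sum_abs_vecMul_exp_rateMatrix_le hq fun i => hreach i s hs
  refine ⟨rateMatrix q, 2 * C, lam, by positivity, hlam,
    fun i j h => (rateMatrix_apply_of_ne q h).symm ▸ hq i j,
    fun i j h hE => (rateMatrix_apply_of_ne q h).trans (hqE i j hE), sum_rateMatrix_row q,
    fun x0 hx0 t ht => ?_⟩
  have hfix : xd ᵥ* exp (t • rateMatrix q) = xd :=
    vecMul_exp_of_vecMul_eq_zero (by rw [vecMul_smul, hstat, smul_zero])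
  calc euclNorm (exp (t • (rateMatrix q)ᵀ) *ᵥ x0 - xd)
      = euclNorm ((x0 - xd) ᵥ* exp (t • rateMatrix q)) := by
        rw [← transpose_smul, exp_transpose, mulVec_transpose, sub_vecMul, hfix]
    _ ≤ C * Real.exp (-lam * t) * ∑ i, |(x0 - xd) i| :=
        (euclNorm_le_sum_abs _).trans (hdecay _ (sum_sub_of_mem_probSimplex hx0 hxd) t ht)
    _ ≤ C * Real.exp (-lam * t) * 2 := by
        gcongr
        exact sum_abs_sub_le_two_of_mem_probSimplex hx0 hxd
    _ = 2 * C * Real.exp (-lam * t) := by ring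

/-- for a strongly connected digraph `G = (V, E)` without self-loops and a
target distribution `x^d` with strongly connected support, there is a transition-rate
matrix `Q` compatible with `E` such that `exp (t Qᵀ)` drives every initial distribution
to `x^d` exponentially fast. -/
theorem stabilization_by_constant_rates
    (M : ℕ)(hM : 1 ≤ M) (E : Set (Fin M × Fin M))
    (hloop : ∀ i : Fin M, (i, i) ∉ E)
    (hconn : ∀ i j : Fin M, Relation.ReflTransGen (fun a b => (a, b) ∈ E) i j)
    (xd : Fin M → ℝ) (hxd : xd ∈ probSimplex M)
    (hsupp : ∀ i j : Fin M, 0 < xd i → 0 < xd j →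
      Relation.ReflTransGen (fun a b => (a, b) ∈ E ∧ 0 < xd a ∧ 0 < xd b) i j) :
    ∃ (Q : Matrix (Fin M) (Fin M) ℝ) (C lam : ℝ),
      0 < C ∧ 0 < lam ∧
      (∀ i j, i ≠ j → 0 ≤ Q i j) ∧
      (∀ i j, i ≠ j → (i, j) ∉ E → Q i j = 0) ∧
      (∀ i, ∑ j, Q i j = 0) ∧
      ∀ x0 ∈ probSimplex M, ∀ t : ℝ, 0 ≤ t →
        euclNorm ((NormedSpace.exp (t • Qᵀ)).mulVec x0 - xd) ≤ C * Real.exp (-lam * t) :=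
  stabilization_by_constant_rates_general M E hconn xd hxd hsupp
end
end

section
/- Let G = (V,E) be a strongly connected directed graph on M vertices, let V_s ⊆ V be nonempty with the subgraph of G induced on V_s strongly connected, and let G̃ = (V,Ẽ) be the graph with edge set Ẽ = {(i,j) ∈ E : if i ∈ V_s then j ∈ V_s} (i.e., G with all edges leaving V_s removed). Then every z ∈ P(V) satisfying L_out(G̃) z = 0 has z_i = 0 for all i ∉ V_s and z_i > 0 for all i ∈ V_s. -/
open Matrix

noncomputable section

/-- The out-Laplacian `L_out(H) = D_out(H) - A(H)` of a digraph on `{1,...,M}` with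
edge set `F`, where `A(H) i j = 1` iff `(j, i)` is an edge of `H`. -/
def outLap (M : ℕ) (F : Finset (Fin M × Fin M)) : Matrix (Fin M) (Fin M) ℝ :=
  fun i j =>
    (if i = j then ((F.filter fun e => e.1 = i).card : ℝ) else 0) -
      (if (j, i) ∈ F then 1 else 0)

/-- removing from a strongly connected graph all the edges that leave a
nonempty, strongly connected (as an induced subgraph) vertex set `V_s` yields a graph
`G̃` whose stationary vectors `z ∈ P(V)` (i.e. `L_out(G̃) z = 0`) are supported exactly
on `V_s`, with strictly positive entries there. -/
theorem stationary_vector_support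
    (M : ℕ) (hM : 1 ≤ M) (E : Finset (Fin M × Fin M))
    (hloop : ∀ i : Fin M, (i, i) ∉ E)
    (hconn : ∀ i j : Fin M, Relation.ReflTransGen (fun a b => (a, b) ∈ E) i j)
    (Vs : Finset (Fin M)) (hVs : Vs.Nonempty)
    (hVsconn : ∀ i ∈ Vs, ∀ j ∈ Vs,
      Relation.ReflTransGen (fun a b => (a, b) ∈ E ∧ a ∈ Vs ∧ b ∈ Vs) i j)
    (Etil : Finset (Fin M × Fin M))
    (hEtil : Etil = E.filter fun e => e.1 ∈ Vs → e.2 ∈ Vs)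
    (z : Fin M → ℝ) (hz : z ∈ probSimplex M)
    (hstat : (outLap M Etil).mulVec z = 0) :
    (∀ i : Fin M, i ∉ Vs → z i = 0) ∧ (∀ i ∈ Vs, 0 < z i) := by
  obtain ⟨hz0, hz1⟩ := hz
  -- balance equations
  have hbal : ∀ i : Fin M, ((Etil.filter fun e => e.1 = i).card : ℝ) * z i
      = ∑ j, if (j, i) ∈ Etil then z j else 0 := by
    intro i
    have h := congrFun hstat i
    simp only [mulVec, dotProduct, outLap, Pi.zero_apply, sub_mul, ite_mul, zero_mul, one_mul,
      Finset.sum_sub_distrib, Finset.sum_ite_eq, Finset.mem_univ, if_true] at h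
    linarith [h]
  -- positivity propagation along Etil edges
  have hprop : ∀ i j : Fin M, (i, j) ∈ Etil → 0 < z i → 0 < z j := by
    intro i j hij hi
    have h1 : z i ≤ ∑ k, if (k, j) ∈ Etil then z k else 0 := by
      have := Finset.single_le_sum (f := fun k => if (k, j) ∈ Etil then z k else 0)
        (fun k _ => by by_cases h : (k, j) ∈ Etil <;> simp [h, hz0 k]) (Finset.mem_univ i)
      simpa [hij] using this
    have h2 : 0 < ((Etil.filter fun e => e.1 = j).card : ℝ) * z j :=
      lt_of_lt_of_le hi ((hbal j) ▸ h1)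
    nlinarith [hz0 j, Nat.cast_nonneg (α := ℝ) (Etil.filter fun e => e.1 = j).card]
  -- counting inflow into Vs
  have hcard : ∀ j : Fin M,
      (Vs.filter fun i => (j, i) ∈ Etil).card
        = (Etil.filter fun e => e.1 = j ∧ e.2 ∈ Vs).card := by
    intro j
    apply Finset.card_bij' (fun i _ => (j, i)) (fun e _ => e.2)
    · intro i hi
      simp only [Finset.mem_filter] at hi
      exact Finset.mem_filter.mpr ⟨hi.2, rfl, hi.1⟩
    · intro e he
      simp only [Finset.mem_filter] at he ⊢
      exact ⟨he.2.2, he.2.1 ▸ he.1⟩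
    · intro i hi; rfl
    · intro e he
      simp only [Finset.mem_filter] at he
      exact Prod.ext he.2.1.symm rfl
  have hcd : ∀ i ∈ Vs, (Etil.filter fun e => e.1 = i ∧ e.2 ∈ Vs)
      = Etil.filter fun e => e.1 = i := by
    intro i hi
    apply Finset.filter_congr
    intro e he
    rw [hEtil, Finset.mem_filter] at he
    constructor
    · exact fun h => h.1
    · exact fun h => ⟨h, he.2 (h ▸ hi)⟩
  -- conservation
  have hconsv : ∑ j ∈ Vsᶜ, ((Etil.filter fun e => e.1 = j ∧ e.2 ∈ Vs).card : ℝ) * z j = 0 := by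
    have hA : ∑ i ∈ Vs, ((Etil.filter fun e => e.1 = i).card : ℝ) * z i
        = ∑ j, ((Etil.filter fun e => e.1 = j ∧ e.2 ∈ Vs).card : ℝ) * z j := by
      calc ∑ i ∈ Vs, ((Etil.filter fun e => e.1 = i).card : ℝ) * z i
          = ∑ i ∈ Vs, ∑ j, if (j, i) ∈ Etil then z j else 0 :=
            Finset.sum_congr rfl fun i _ => hbal i
        _ = ∑ j, ∑ i ∈ Vs, if (j, i) ∈ Etil then z j else 0 := Finset.sum_comm
        _ = ∑ j, ((Etil.filter fun e => e.1 = j ∧ e.2 ∈ Vs).card : ℝ) * z j := by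
            refine Finset.sum_congr rfl fun j _ => ?_
            rw [← Finset.sum_filter, Finset.sum_const, nsmul_eq_mul, hcard j]
    have hsplit := Finset.sum_add_sum_compl Vs
      (fun j => ((Etil.filter fun e => e.1 = j ∧ e.2 ∈ Vs).card : ℝ) * z j)
    have hVseq : ∑ i ∈ Vs, ((Etil.filter fun e => e.1 = i ∧ e.2 ∈ Vs).card : ℝ) * z i
        = ∑ i ∈ Vs, ((Etil.filter fun e => e.1 = i).card : ℝ) * z i :=
      Finset.sum_congr rfl fun i hi => by rw [hcd i hi]
    linarith
  have key : ∀ j : Fin M, j ∉ Vs →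
      ((Etil.filter fun e => e.1 = j ∧ e.2 ∈ Vs).card : ℝ) * z j = 0 := by
    intro j hj
    have := (Finset.sum_eq_zero_iff_of_nonneg (fun i _ => mul_nonneg (Nat.cast_nonneg _) (hz0 i))).mp hconsv j
      (Finset.mem_compl.mpr hj)
    exact this
  -- part 1
  have hzero : ∀ j : Fin M, j ∉ Vs → z j = 0 := by
    intro j hj
    by_contra hne
    have hjpos : 0 < z j := lt_of_le_of_ne (hz0 j) (Ne.symm hne)
    obtain ⟨v, hv⟩ := hVs
    have hpath := hconn j v
    clear hne
    induction hpath using Relation.ReflTransGen.head_induction_on with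
    | refl => exact hj hv
    | head hxc _ ih =>
      rename_i x c _
      have hxc' : (x, c) ∈ Etil := by
        rw [hEtil, Finset.mem_filter]
        exact ⟨hxc, fun h => absurd h hj⟩
      by_cases hc : c ∈ Vs
      · have hmem : (x, c) ∈ Etil.filter fun e => e.1 = x ∧ e.2 ∈ Vs :=
          Finset.mem_filter.mpr ⟨hxc', rfl, hc⟩
        have hpos : (0:ℝ) < ((Etil.filter fun e => e.1 = x ∧ e.2 ∈ Vs).card : ℝ) := by
          have := Finset.card_pos.mpr ⟨(x, c), hmem⟩
          exact_mod_cast this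
        have := key x hj
        nlinarith
      · exact ih hc (hprop x c hxc' hjpos)
  -- part 2
  have hsum : ∑ i ∈ Vs, z i = 1 := by
    rw [← hz1]
    exact Finset.sum_subset (Finset.subset_univ Vs) (fun x _ hx => hzero x hx)
  have hex : ∃ v ∈ Vs, 0 < z v := by
    by_contra h
    push_neg at h
    have : ∑ i ∈ Vs, z i = 0 :=
      Finset.sum_eq_zero fun i hi => le_antisymm (h i hi) (hz0 i)
    rw [this] at hsum
    norm_num at hsum
  obtain ⟨v, hvVs, hvpos⟩ := hex
  refine ⟨hzero, fun i hi => ?_⟩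
  have hpath := hVsconn v hvVs i hi
  clear hi
  induction hpath with
  | refl => exact hvpos
  | tail _ hbc ih =>
    rename_i b c _
    have hbc' : (b, c) ∈ Etil := by
      rw [hEtil, Finset.mem_filter]
      exact ⟨hbc.1, fun _ => hbc.2.2⟩
    exact hprop b c hbc' ih
end
end

section
/- Let G = (V,E) be a strongly connected directed graph on M vertices. Then the control system ẋ = Σ_{e∈E} u_e(t) B_e x is small-time globally controllable from every point of int P(V): for every x^0, x^f ∈ int P(V) and every T > 0 there exist a continuously differentiable curve x : [0,T] → ℝ^M and functions u_e : [0,T] → [0,∞) for each e ∈ E such that x(0) = x^0, x(T) = x^f, and x'(t) = Σ_{e∈E} u_e(t) B_e x(t) for all t ∈ [0,T]. -/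
/-!
The straight segment from `x0` to `xf` stays in the open simplex and has constant velocity
`v = (xf - x0) / T`, whose entries sum to zero. Fixing a root `r`, such a `v` equals
`∑ i, v i • (e_i - e_r)`, and strong connectivity writes each term as a nonnegative multiple of a
sum of edge vectors `e_j - e_i` along a path from `r` to `i` or back. Since `B_e x = x_i (e_j - e_i)`
with `x_i > 0` on the segment, the controls `u_e(t) = c_e / x_i(t)` realize `v` at every time.
-/

open Matrix

noncomputable section

/-- The (relative) interior of the probability simplex: strictly positive densities. -/
def probSimplexInterior (M : ℕ) : Set (Fin M → ℝ) :=
  {x | (∀ i, 0 < x i) ∧ ∑ i, x i = 1}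

/-- The control matrix `B_e` for an edge `e = (i, j)`: entry `(i,i)` is `-1`, entry
`(j,i)` is `1`, all other entries vanish. -/
def Bmat (M : ℕ) (e : Fin M × Fin M) : Matrix (Fin M) (Fin M) ℝ :=
  fun i j =>
    (if i = e.1 ∧ j = e.1 then (-1 : ℝ) else 0) + (if i = e.2 ∧ j = e.1 then 1 else 0)

open Relation

section EdgeCone

variable {V : Type*} [DecidableEq V]

def edgeVector (e : V × V) : V → ℝ := Pi.single e.2 1 - Pi.single e.1 1

def edgeCone (E : Finset (V × V)) : PointedCone ℝ (V → ℝ) :=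
  PointedCone.hull ℝ (edgeVector '' E)

variable {E : Finset (V × V)}

lemma edgeVector_mem_edgeCone {e : V × V} (he : e ∈ E) : edgeVector e ∈ edgeCone E :=
  PointedCone.subset_hull ⟨e, he, rfl⟩

lemma edgeVector_mem_edgeCone_of_reflTransGen {i j : V}
    (h : ReflTransGen (fun a b => (a, b) ∈ E) i j) : edgeVector (i, j) ∈ edgeCone E := by
  induction h with
  | refl => simp [edgeVector]
  | @tail b c _ hbc ih =>
    have hsplit : edgeVector (i, c) = edgeVector (i, b) + edgeVector (b, c) := by
      simp only [edgeVector]; abel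
    rw [hsplit]
    exact add_mem ih (edgeVector_mem_edgeCone hbc)

lemma mem_edgeCone_of_sum_eq_zero [Fintype V]
    (hconn : ∀ i j, ReflTransGen (fun a b => (a, b) ∈ E) i j)
    {v : V → ℝ} (hv : ∑ i, v i = 0) : v ∈ edgeCone E := by
  rcases isEmpty_or_nonempty V with _ | ⟨⟨r⟩⟩
  · simp [Subsingleton.elim v 0]
  have hdecomp : v = ∑ i, v i • edgeVector (r, i) := by
    ext k
    simp [edgeVector, mul_sub, Finset.sum_sub_distrib, hv, Pi.single_apply]
  rw [hdecomp]
  refine sum_mem fun i _ => ?_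
  rcases le_total 0 (v i) with hvi | hvi
  · exact PointedCone.smul_mem _ hvi (edgeVector_mem_edgeCone_of_reflTransGen (hconn r i))
  · have hflip : v i • edgeVector (r, i) = (-v i) • edgeVector (i, r) := by
      simp only [edgeVector, smul_sub, neg_smul]; abel
    rw [hflip]
    exact PointedCone.smul_mem _ (neg_nonneg.2 hvi)
      (edgeVector_mem_edgeCone_of_reflTransGen (hconn i r))

lemma exists_nonneg_sum_smul_edgeVector_eq {v : V → ℝ} (hv : v ∈ edgeCone E) :
    ∃ c : V × V → ℝ, (∀ e, 0 ≤ c e) ∧ ∑ e ∈ E, c e • edgeVector e = v := by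
  obtain ⟨l, hl, rfl⟩ := (Finsupp.mem_span_image_iff_linearCombination _).1 hv
  refine ⟨fun e => l e, fun e => (l e).2, ?_⟩
  rw [Finsupp.linearCombination_apply_of_mem_supported _ hl]
  rfl

end EdgeCone

lemma Bmat_apply {M : ℕ} (e : Fin M × Fin M) (i j : Fin M) :
    Bmat M e i j = if j = e.1 then edgeVector e i else 0 := by
  simp only [Bmat, edgeVector, Pi.sub_apply, Pi.single_apply]
  split_ifs <;> grind

lemma Bmat_mulVec {M : ℕ} (e : Fin M × Fin M) (x : Fin M → ℝ) :
    Bmat M e *ᵥ x = x e.1 • edgeVector e := by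
  ext i
  simp [mulVec, dotProduct, Bmat_apply, mul_comm]

lemma sum_div_smul_Bmat_mulVec {M : ℕ} (E : Finset (Fin M × Fin M)) (c : Fin M × Fin M → ℝ)
    {x : Fin M → ℝ} (hx : ∀ i, x i ≠ 0) :
    ∑ e ∈ E, (c e / x e.1) • (Bmat M e *ᵥ x) = ∑ e ∈ E, c e • edgeVector e :=
  Finset.sum_congr rfl fun e _ => by rw [Bmat_mulVec, smul_smul, div_mul_cancel₀ _ (hx e.1)]

lemma lineMap_apply_pos {V : Type*} {x y : V → ℝ} (hx : ∀ i, 0 < x i) (hy : ∀ i, 0 < y i)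
    {s : ℝ} (hs : s ∈ Set.Icc 0 1) (i : V) : 0 < AffineMap.lineMap x y s i := by
  have hconv : Convex ℝ (Set.univ.pi fun _ : V => Set.Ioi (0 : ℝ)) :=
    convex_pi fun _ _ => convex_Ioi 0
  exact hconv.lineMap_mem (by simpa using hx) (by simpa using hy) hs i (Set.mem_univ i)

lemma hasDerivAt_lineMap_div_const {F : Type*} [NormedAddCommGroup F] [NormedSpace ℝ F]
    (a b : F) (T t : ℝ) :
    HasDerivAt (fun t => AffineMap.lineMap a b (t / T)) (T⁻¹ • (b - a)) t := by
  simpa [Function.comp_def, div_eq_inv_mul] using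
    AffineMap.hasDerivAt_lineMap.scomp t ((hasDerivAt_id t).div_const T)

theorem small_time_global_controllability_general
    (M : ℕ) (E : Finset (Fin M × Fin M))
    (hconn : ∀ i j : Fin M, Relation.ReflTransGen (fun a b => (a, b) ∈ E) i j)
    (x0 xf : Fin M → ℝ)
    (hx0 : x0 ∈ probSimplexInterior M) (hxf : xf ∈ probSimplexInterior M)
    (T : ℝ) (hT : 0 < T) :
    ∃ (x : ℝ → Fin M → ℝ) (u : Fin M × Fin M → ℝ → ℝ),
      ContDiffOn ℝ 1 x (Set.Icc 0 T) ∧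
      (∀ e ∈ E, ∀ t ∈ Set.Icc (0 : ℝ) T, 0 ≤ u e t) ∧
      x 0 = x0 ∧ x T = xf ∧
      ∀ t ∈ Set.Icc (0 : ℝ) T,
        HasDerivWithinAt x (∑ e ∈ E, u e t • (Bmat M e).mulVec (x t))
          (Set.Icc 0 T) t := by
  have hsum : ∑ i, (T⁻¹ • (xf - x0)) i = 0 := by
    simp [← Finset.mul_sum, Finset.sum_sub_distrib, hx0.2, hxf.2]
  obtain ⟨c, hc, hcv⟩ :=
    exists_nonneg_sum_smul_edgeVector_eq (mem_edgeCone_of_sum_eq_zero hconn hsum)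
  set x : ℝ → Fin M → ℝ := fun t => AffineMap.lineMap x0 xf (t / T) with hx
  have hpos : ∀ t ∈ Set.Icc 0 T, ∀ i, 0 < x t i := fun t ht =>
    lineMap_apply_pos hx0.1 hxf.1 ⟨div_nonneg ht.1 hT.le, div_le_one_of_le₀ ht.2 hT.le⟩
  refine ⟨x, fun e t => c e / x t e.1, ?_, fun e _ t ht => div_nonneg (hc e) (hpos t ht e.1).le,
    by simp [hx], by simp [hx, hT.ne'], fun t ht => ?_⟩
  · exact ((AffineMap.contDiff_lineMap x0 xf).comp (contDiff_id.div_const T)).contDiffOn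
  · rw [sum_div_smul_Bmat_mulVec E c fun i => (hpos t ht i).ne', hcv]
    exact (hasDerivAt_lineMap_div_const x0 xf T t).hasDerivWithinAt

/-- for a strongly connected digraph, the system
`ẋ = ∑_{e ∈ E} u_e(t) B_e x` is small-time globally controllable from every point of
the interior of the probability simplex. -/
theorem small_time_global_controllability
    (M : ℕ) (hM : 1 ≤ M) (E : Finset (Fin M × Fin M))
    (hloop : ∀ i : Fin M, (i, i) ∉ E)
    (hconn : ∀ i j : Fin M, Relation.ReflTransGen (fun a b => (a, b) ∈ E) i j)
    (x0 xf : Fin M → ℝ)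
    (hx0 : x0 ∈ probSimplexInterior M) (hxf : xf ∈ probSimplexInterior M)
    (T : ℝ) (hT : 0 < T) :
    ∃ (x : ℝ → Fin M → ℝ) (u : Fin M × Fin M → ℝ → ℝ),
      ContDiffOn ℝ 1 x (Set.Icc 0 T) ∧
      (∀ e ∈ E, ∀ t ∈ Set.Icc (0 : ℝ) T, 0 ≤ u e t) ∧
      x 0 = x0 ∧ x T = xf ∧
      ∀ t ∈ Set.Icc (0 : ℝ) T,
        HasDerivWithinAt x (∑ e ∈ E, u e t • (Bmat M e).mulVec (x t))
          (Set.Icc 0 T) t :=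
  small_time_global_controllability_general M E hconn x0 xf hx0 hxf T hT
end
end

section
/- Let G = (V,E) be a strongly connected directed graph on M vertices and let y ∈ int P(V). Then the conical combinations of the vectors {B_e y : e ∈ E} span the tangent space of the simplex: for every v ∈ ℝ^M with Σ_{i=1}^M v_i = 0 there exist nonnegative coefficients c_e ≥ 0, e ∈ E, such that v = Σ_{e∈E} c_e B_e y. -/
open Matrix

noncomputable section

/-- for a strongly connected digraph and `y` in the interior of the
simplex, the conical combinations of `{B_e y : e ∈ E}` span the tangent space of the
simplex: every `v` with `∑ i, v i = 0` is a nonnegative combination `∑ e, c_e B_e y`. -/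
theorem conical_span_of_tangent_space
    (M : ℕ) (hM : 1 ≤ M) (E : Finset (Fin M × Fin M))
    (hloop : ∀ i : Fin M, (i, i) ∉ E)
    (hconn : ∀ i j : Fin M, Relation.ReflTransGen (fun a b => (a, b) ∈ E) i j)
    (y : Fin M → ℝ) (hy : y ∈ probSimplexInterior M)
    (v : Fin M → ℝ) (hv : ∑ i, v i = 0) :
    ∃ c : Fin M × Fin M → ℝ,
      (∀ e, 0 ≤ c e) ∧ v = ∑ e ∈ E, c e • (Bmat M e).mulVec y := by
  classical
  obtain ⟨hypos, -⟩ := hy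
  set d : Fin M × Fin M → (Fin M → ℝ) := fun e => (Bmat M e).mulVec y with hd
  have hde : ∀ e : Fin M × Fin M,
      d e = y e.1 • ((Pi.single e.2 1 : Fin M → ℝ) - Pi.single e.1 1) := by
    intro e
    funext i
    simp only [hd, mulVec, dotProduct, Bmat, add_mul, ite_mul, one_mul, neg_mul, zero_mul,
      Finset.sum_add_distrib, Pi.smul_apply, Pi.sub_apply, smul_eq_mul]
    by_cases h1 : i = e.1 <;> by_cases h2 : i = e.2
    · have h3 : e.2 = e.1 := by rw [← h1, ← h2]
      simp [h1, h2, h3, Pi.single_apply, Finset.sum_ite_eq']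
    · have h3 : ¬ e.1 = e.2 := fun h => h2 (h1.trans h)
      have h3' : ¬ e.2 = e.1 := fun h => h3 h.symm
      simp [h1, h2, h3, h3', Pi.single_apply, Finset.sum_ite_eq']
    · have h3 : ¬ e.2 = e.1 := fun h => h1 (h2.trans h)
      simp [h1, h2, h3, Pi.single_apply, Finset.sum_ite_eq']
    · simp [h1, h2, Pi.single_apply]
  set C : Set (Fin M → ℝ) :=
    {w | ∃ c : Fin M × Fin M → ℝ, (∀ e, 0 ≤ c e) ∧ w = ∑ e ∈ E, c e • d e} with hC
  have hzero : (0 : Fin M → ℝ) ∈ C := ⟨0, fun e => le_rfl, by simp⟩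
  have hadd : ∀ w₁ w₂, w₁ ∈ C → w₂ ∈ C → w₁ + w₂ ∈ C := by
    rintro w₁ w₂ ⟨c₁, hc₁, rfl⟩ ⟨c₂, hc₂, rfl⟩
    exact ⟨c₁ + c₂, fun e => add_nonneg (hc₁ e) (hc₂ e), by
      rw [← Finset.sum_add_distrib]; simp [add_smul]⟩
  have hsmul : ∀ (t : ℝ) w, 0 ≤ t → w ∈ C → t • w ∈ C := by
    rintro t w ht ⟨c, hc, rfl⟩
    exact ⟨t • c, fun e => mul_nonneg ht (hc e), by
      rw [Finset.smul_sum]; simp [smul_smul]⟩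
  have hedge : ∀ e ∈ E, d e ∈ C := by
    intro e he
    refine ⟨fun e' => if e' = e then 1 else 0, fun e' => by positivity, ?_⟩
    simp [ite_smul, Finset.sum_ite_eq', he]
  have hδ : ∀ a b : Fin M,
      ((Pi.single b 1 : Fin M → ℝ) - Pi.single a 1) ∈ C := by
    intro a b
    induction hconn a b with
    | refl => simpa using hzero
    | tail hab hbc ih =>
      rename_i b' c'
      have h1 : ((Pi.single c' 1 : Fin M → ℝ) - Pi.single b' 1) ∈ C := by
        have := hsmul (y b')⁻¹ _ (inv_nonneg.mpr (hypos b').le) (hedge (b', c') hbc)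
        rwa [hde (b', c'), smul_smul, inv_mul_cancel₀ (hypos b').ne', one_smul] at this
      have hmem := hadd _ _ h1 ih
      have heq : ((Pi.single c' 1 : Fin M → ℝ) - Pi.single b' 1) +
          ((Pi.single b' 1 : Fin M → ℝ) - Pi.single a 1)
          = (Pi.single c' 1 : Fin M → ℝ) - Pi.single a 1 := by abel
      rwa [heq] at hmem
  have hsum : ∀ (f : Fin M → (Fin M → ℝ)), (∀ i, f i ∈ C) → (∑ i, f i) ∈ C := by
    intro f hf
    exact Finset.sum_induction f (· ∈ C) hadd hzero (fun i _ => hf i)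
  set i0 : Fin M := ⟨0, hM⟩ with hi0
  have hvmem : v ∈ C := by
    have h1 : (∑ i, max (v i) 0 • ((Pi.single i 1 : Fin M → ℝ) - Pi.single i0 1)) ∈ C :=
      hsum _ fun i => hsmul _ _ (le_max_right _ _) (hδ i0 i)
    have h2 : (∑ i, max (-(v i)) 0 • ((Pi.single i0 1 : Fin M → ℝ) - Pi.single i 1)) ∈ C :=
      hsum _ fun i => hsmul _ _ (le_max_right _ _) (hδ i i0)
    have hmem := hadd _ _ h1 h2
    have heq : (∑ i, max (v i) 0 • ((Pi.single i 1 : Fin M → ℝ) - Pi.single i0 1)) +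
        (∑ i, max (-(v i)) 0 • ((Pi.single i0 1 : Fin M → ℝ) - Pi.single i 1)) = v := by
      rw [← Finset.sum_add_distrib]
      have hterm : ∀ i, max (v i) 0 • ((Pi.single i 1 : Fin M → ℝ) - Pi.single i0 1) +
          max (-(v i)) 0 • ((Pi.single i0 1 : Fin M → ℝ) - Pi.single i 1)
          = v i • (Pi.single i 1 : Fin M → ℝ) - v i • (Pi.single i0 1 : Fin M → ℝ) := by
        intro i
        have hmax : max (v i) 0 - max (-(v i)) 0 = v i := by
          rcases le_total (v i) 0 with h | h
          · rw [max_eq_right h, max_eq_left (by linarith)]; ring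
          · rw [max_eq_left h, max_eq_right (by linarith)]; ring
        have hmod : max (v i) 0 • ((Pi.single i 1 : Fin M → ℝ) - Pi.single i0 1) +
            max (-(v i)) 0 • ((Pi.single i0 1 : Fin M → ℝ) - Pi.single i 1)
            = (max (v i) 0 - max (-(v i)) 0) • (Pi.single i 1 : Fin M → ℝ)
              - (max (v i) 0 - max (-(v i)) 0) • (Pi.single i0 1 : Fin M → ℝ) := by
          module
        rw [hmod, hmax]
      rw [Finset.sum_congr rfl fun i _ => hterm i, Finset.sum_sub_distrib, ← Finset.sum_smul,
        hv, zero_smul, sub_zero]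
      funext j
      simp [Pi.single_apply, Finset.sum_ite_eq]
    rwa [heq] at hmem
  obtain ⟨c, hc, hcv⟩ := hvmem
  exact ⟨c, hc, hcv⟩
end
end

section
/- Let x^d ∈ P(V) be strictly positive, let w ∈ {0,1}^{M×M} be symmetric with zero diagonal such that the undirected graph on {1,...,M} with an edge between i and j whenever w_{ij} = 1 is connected, and let g, G(·), D be as in the density-feedback construction. Then for every x ∈ P(V) with x ≠ x^d, x^T D G(x) D x < 0, while at x = x^d the expression x^T D G(x^d) D x equals 0 since G(x^d) = 0. -/
open Matrix

noncomputable section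

/-- `g_i(x) = (x_i - x^d_i)²`. -/
def gfun {M : ℕ} (xd x : Fin M → ℝ) (i : Fin M) : ℝ := (x i - xd i) ^ 2

/-- The density-feedback transition-rate matrix `G(x)`:
`G(x)^{ij} = w_{ij} (g_i(x) + g_j(x))` for `i ≠ j`, and
`G(x)^{ii} = -∑_{k ≠ i} w_{ik} (g_i(x) + g_k(x))`. -/
def Gmat {M : ℕ} (xd : Fin M → ℝ) (w : Matrix (Fin M) (Fin M) ℝ) (x : Fin M → ℝ) :
    Matrix (Fin M) (Fin M) ℝ :=
  fun i j =>
    if i = j then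
      -∑ k ∈ Finset.univ.filter (fun k => k ≠ i), w i k * (gfun xd x i + gfun xd x k)
    else w i j * (gfun xd x i + gfun xd x j)

/-- The diagonal matrix `D` with `D^{ii} = 1 / x^d_i`. -/
def Dmat {M : ℕ} (xd : Fin M → ℝ) : Matrix (Fin M) (Fin M) ℝ :=
  Matrix.diagonal fun i => 1 / xd i

/-- for a connected bidirected graph encoded by the 0/1 symmetric
adjacency matrix `w`, the Lyapunov derivative `xᵀ D G(x) D x` is strictly negative for
every `x ∈ P(V)` with `x ≠ x^d`, and `G(x^d) = 0` (so it vanishes at `x = x^d`). -/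
theorem lyapunov_derivative_strictly_negative
    (M : ℕ) (xd : Fin M → ℝ)
    (hxd : xd ∈ probSimplex M) (hpos : ∀ i, 0 < xd i)
    (w : Matrix (Fin M) (Fin M) ℝ)
    (h01 : ∀ i j, w i j = 0 ∨ w i j = 1)
    (hsymm : ∀ i j, w i j = w j i) (hdiag : ∀ i, w i i = 0)
    (hconn : ∀ i j : Fin M, Relation.ReflTransGen (fun a b => w a b = 1) i j) :
    Gmat xd w xd = 0 ∧
    ∀ x ∈ probSimplex M, x ≠ xd →
      dotProduct ((Dmat xd).mulVec x)
        ((Gmat xd w x).mulVec ((Dmat xd).mulVec x)) < 0 := by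
  classical
  constructor
  · ext i j
    simp [Gmat, gfun, sub_self]
  · intro x hx hne
    set y : Fin M → ℝ := fun i => x i / xd i with hy
    set a : Fin M → Fin M → ℝ := fun i j => w i j * (gfun xd x i + gfun xd x j) with ha
    have haii : ∀ i, a i i = 0 := fun i => by simp [ha, hdiag i]
    have hasymm : ∀ i j, a i j = a j i := fun i j => by
      simp only [ha, hsymm i j]; ring
    have hanneg : ∀ i j, 0 ≤ a i j := fun i j => by
      have hw : 0 ≤ w i j := by rcases h01 i j with h | h <;> simp [h]
      have hg : 0 ≤ gfun xd x i + gfun xd x j := by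
        have := sq_nonneg (x i - xd i); have := sq_nonneg (x j - xd j)
        simp only [gfun]; positivity
      exact mul_nonneg hw hg
    have hy1 : ∀ i, x i = xd i → y i = 1 := by
      intro i hxi
      simp [hy, hxi, div_self (ne_of_gt (hpos i))]
    have hDx : (Dmat xd).mulVec x = y := by
      funext i
      simp [Dmat, Matrix.mulVec_diagonal, hy, div_eq_inv_mul]
    rw [hDx]
    have hmv : ∀ i, (Gmat xd w x).mulVec y i = ∑ j, a i j * (y j - y i) := by
      intro i
      have herase : ∀ (f : Fin M → ℝ), f i = 0 →
          ∑ j ∈ Finset.univ.erase i, f j = ∑ j, f j := by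
        intro f hf; exact Finset.sum_erase _ hf
      have : (Gmat xd w x).mulVec y i
          = ∑ j, (if i = j then -∑ k ∈ Finset.univ.filter (fun k => k ≠ i), a i k
              else a i j) * y j := by
        simp [Matrix.mulVec, dotProduct, Gmat, ha]
      rw [this]
      rw [← Finset.add_sum_erase _ _ (Finset.mem_univ i)]
      have h1 : ∀ j ∈ Finset.univ.erase i,
          (if i = j then -∑ k ∈ Finset.univ.filter (fun k => k ≠ i), a i k
              else a i j) * y j = a i j * y j := by
        intro j hj
        rw [Finset.mem_erase] at hj
        rw [if_neg (fun h => hj.1 h.symm)]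
      rw [Finset.sum_congr rfl h1, if_pos rfl]
      rw [herase (fun j => a i j * y j) (by simp [haii i])]
      have hfilt : Finset.univ.filter (fun k => k ≠ i) = Finset.univ.erase i := by
        ext k; simp [Finset.mem_erase, and_comm]
      rw [hfilt, herase (fun k => a i k) (haii i)]
      have hr : ∀ j, a i j * (y j - y i) = a i j * y j - a i j * y i := fun j => by ring
      rw [Finset.sum_congr rfl (fun j _ => hr j), Finset.sum_sub_distrib, ← Finset.sum_mul]
      ring
    have hQ1 : dotProduct y ((Gmat xd w x).mulVec y)
        = ∑ i, ∑ j, y i * (a i j * (y j - y i)) := by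
      simp only [dotProduct]
      apply Finset.sum_congr rfl
      intro i _
      rw [hmv i, Finset.mul_sum]
    have hQ2 : dotProduct y ((Gmat xd w x).mulVec y)
        = ∑ i, ∑ j, y j * (a i j * (y i - y j)) := by
      rw [hQ1, Finset.sum_comm]
      apply Finset.sum_congr rfl
      intro i _
      apply Finset.sum_congr rfl
      intro j _
      rw [hasymm i j]
    set Q := dotProduct y ((Gmat xd w x).mulVec y) with hQdef
    have h2 : Q + Q = -∑ i, ∑ j, a i j * (y i - y j) ^ 2 := by
      calc Q + Q = (∑ i, ∑ j, y i * (a i j * (y j - y i)))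
          + (∑ i, ∑ j, y j * (a i j * (y i - y j))) := by rw [← hQ1, ← hQ2]
        _ = -∑ i, ∑ j, a i j * (y i - y j) ^ 2 := ?_
      rw [← Finset.sum_add_distrib, ← Finset.sum_neg_distrib]
      apply Finset.sum_congr rfl
      intro i _
      rw [← Finset.sum_add_distrib, ← Finset.sum_neg_distrib]
      apply Finset.sum_congr rfl
      intro j _
      ring
    -- find an edge with different y values
    have hex : ∃ i j, w i j = 1 ∧ y i ≠ y j := by
      by_contra hcon
      push_neg at hcon
      have hally : ∀ i j, y i = y j := by
        intro i j
        induction hconn i j with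
        | refl => rfl
        | tail _ hbc ih => exact ih.trans (hcon _ _ hbc)
      apply hne
      have hM : 0 < M := by
        rcases Nat.eq_zero_or_pos M with h | h
        · exfalso; apply hne; funext i; exact absurd i.2 (by omega)
        · exact h
      let i0 : Fin M := ⟨0, hM⟩
      have hk : ∀ k, x k = y i0 * xd k := by
        intro k
        have h3 : y k = y i0 := hally k i0
        have h4 : y k * xd k = x k := div_mul_cancel₀ _ (ne_of_gt (hpos k))
        rw [← h4, h3]
      have hsum : (1 : ℝ) = y i0 * 1 := by
        calc (1 : ℝ) = ∑ k, x k := hx.2.symm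
          _ = ∑ k, y i0 * xd k := Finset.sum_congr rfl fun k _ => hk k
          _ = y i0 * ∑ k, xd k := by rw [Finset.mul_sum]
          _ = y i0 * 1 := by rw [hxd.2]
      have hyi0 : y i0 = 1 := by linarith [hsum]
      funext k
      rw [hk k, hyi0, one_mul]
    obtain ⟨i0, j0, hw1, hyne⟩ := hex
    have hgpos : 0 < gfun xd x i0 + gfun xd x j0 := by
      rcases lt_or_eq_of_le (add_nonneg (sq_nonneg (x i0 - xd i0)) (sq_nonneg (x j0 - xd j0)) :
        (0:ℝ) ≤ gfun xd x i0 + gfun xd x j0) with h | h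
      · exact h
      · exfalso
        have h1 : gfun xd x i0 = 0 := by
          have := sq_nonneg (x i0 - xd i0); have := sq_nonneg (x j0 - xd j0)
          simp only [gfun] at *; nlinarith
        have h2 : gfun xd x j0 = 0 := by
          have := sq_nonneg (x i0 - xd i0); have := sq_nonneg (x j0 - xd j0)
          simp only [gfun] at *; nlinarith
        have hx1 : x i0 = xd i0 := by
          have := pow_eq_zero_iff (n := 2) (by norm_num) |>.mp h1
          linarith [sub_eq_zero.mp this]
        have hx2 : x j0 = xd j0 := by
          have := pow_eq_zero_iff (n := 2) (by norm_num) |>.mp h2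
          linarith [sub_eq_zero.mp this]
        exact hyne ((hy1 i0 hx1).trans (hy1 j0 hx2).symm)
    have hterm : 0 < a i0 j0 * (y i0 - y j0) ^ 2 := by
      apply mul_pos
      · rw [ha]; simpa [hw1] using hgpos
      · rw [← sq_abs]
        exact pow_pos (abs_pos.mpr (sub_ne_zero.mpr hyne)) 2
    have hS : 0 < ∑ i, ∑ j, a i j * (y i - y j) ^ 2 := by
      apply Finset.sum_pos'
      · intro i _
        exact Finset.sum_nonneg fun j _ => mul_nonneg (hanneg i j) (sq_nonneg _)
      · refine ⟨i0, Finset.mem_univ _, Finset.sum_pos'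
          (fun j _ => mul_nonneg (hanneg i0 j) (sq_nonneg _))
          ⟨j0, Finset.mem_univ _, hterm⟩⟩
    linarith
end
end

section
/- Let x^d ∈ P(V) be strictly positive, let w ∈ {0,1}^{M×M} be symmetric with zero diagonal, and let g, G(·), D be as in the density-feedback construction. Then the probability simplex is forward invariant for the closed-loop dynamics: if x : [0,∞) → ℝ^M is differentiable with x'(t) = G(x(t))^T D x(t) for all t ≥ 0 and x(0) ∈ P(V), then x(t) ∈ P(V) for all t ≥ 0. -/
open Matrix

noncomputable section

/-! The closed loop reads `ẋ = A(x) x` with `A(x) = G(x)ᵀ D`. The columns of `A(x)` sum to zero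
because the rows of `G(x)` do, so `∑ i, x i` is conserved. Off the diagonal `A(x)` is nonnegative
(it is a Metzler matrix), so the negative part `m = x ⊓ 0` satisfies
`d/dt ‖m‖² = 2 m ⬝ A x ≤ 2 m ⬝ A m ≤ K ‖m‖²` on every compact time interval, and Grönwall's
inequality keeps `‖m‖²` at its initial value `0`. -/

open Set Filter Topology

def Matrix.IsMetzler {ι : Type*} (A : Matrix ι ι ℝ) : Prop :=
  ∀ i j, i ≠ j → 0 ≤ A i j

section LinearAlgebra

variable {ι : Type*} [Fintype ι]

lemma sum_mulVec_eq_zero {A : Matrix ι ι ℝ} (hA : ∀ j, ∑ i, A i j = 0) (y : ι → ℝ) :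
    ∑ i, (A *ᵥ y) i = 0 := by
  simp only [mulVec, dotProduct]
  rw [Finset.sum_comm]
  simp [← Finset.sum_mul, hA]

lemma Matrix.IsMetzler.inf_zero_dotProduct_mulVec_le {A : Matrix ι ι ℝ} (hA : A.IsMetzler)
    (y : ι → ℝ) : (y ⊓ 0) ⬝ᵥ (A *ᵥ y) ≤ (y ⊓ 0) ⬝ᵥ (A *ᵥ (y ⊓ 0)) := by
  simp only [dotProduct, mulVec, Finset.mul_sum]
  refine Finset.sum_le_sum fun i _ => Finset.sum_le_sum fun j _ => ?_
  simp only [Pi.inf_apply, Pi.zero_apply]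
  rcases eq_or_ne i j with rfl | hij
  · rcases le_total (y i) 0 with h | h <;> simp [h]
  · exact mul_le_mul_of_nonpos_left
      (mul_le_mul_of_nonneg_left (min_le_left _ _) (hA i j hij)) (min_le_right _ _)

lemma dotProduct_mulVec_self_le {A : Matrix ι ι ℝ} {C : ℝ} (hC : ∀ i j, |A i j| ≤ C)
    (v : ι → ℝ) : v ⬝ᵥ (A *ᵥ v) ≤ Fintype.card ι * C * (v ⬝ᵥ v) := by
  rcases isEmpty_or_nonempty ι with hι | ⟨⟨i₀⟩⟩
  · simp [dotProduct]
  have hC₀ : 0 ≤ C := (abs_nonneg _).trans (hC i₀ i₀)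
  calc v ⬝ᵥ (A *ᵥ v) = ∑ i, ∑ j, v i * A i j * v j := by
        simp only [dotProduct, mulVec, Finset.mul_sum, mul_assoc]
    _ ≤ ∑ i, ∑ j, C * (|v i| * |v j|) := by
        refine Finset.sum_le_sum fun i _ => Finset.sum_le_sum fun j _ => ?_
        calc v i * A i j * v j ≤ |v i * A i j * v j| := le_abs_self _
          _ = |A i j| * (|v i| * |v j|) := by rw [abs_mul, abs_mul]; ring
          _ ≤ C * (|v i| * |v j|) := by gcongr; exact hC i j
    _ = C * (∑ i, |v i|) ^ 2 := by
        rw [sq, Finset.sum_mul_sum, Finset.mul_sum]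
        simp only [Finset.mul_sum]
    _ ≤ C * (Fintype.card ι * ∑ i, |v i| ^ 2) := by
        gcongr; exact sq_sum_le_card_mul_sum_sq
    _ = Fintype.card ι * C * (v ⬝ᵥ v) := by
        simp_rw [sq_abs]
        simp only [dotProduct, sq]
        ring

end LinearAlgebra

lemma hasDerivAt_min_zero_sq (s : ℝ) : HasDerivAt (fun s : ℝ => min s 0 ^ 2) (2 * min s 0) s := by
  rcases lt_trichotomy s 0 with hs | rfl | hs
  · have : (fun s : ℝ => s ^ 2) =ᶠ[𝓝 s] fun s => min s 0 ^ 2 :=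
      (eventually_lt_nhds hs).mono fun r hr => by simp [min_eq_left hr.le]
    simpa [min_eq_left hs.le] using (hasDerivAt_pow 2 s).congr_of_eventuallyEq this.symm
  · rw [hasDerivAt_iff_isLittleO_nhds_zero]
    refine (Asymptotics.IsBigO.of_bound 1 (Eventually.of_forall fun h => ?_)).trans_isLittleO
      (Asymptotics.isLittleO_pow_id one_lt_two)
    rcases le_total h 0 with hh | hh <;> simp [hh]
  · have : (fun _ : ℝ => (0 : ℝ)) =ᶠ[𝓝 s] fun s => min s 0 ^ 2 :=
      (eventually_gt_nhds hs).mono fun r hr => by simp [min_eq_right hr.le]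
    simpa [min_eq_right hs.le] using (hasDerivAt_const s (0 : ℝ)).congr_of_eventuallyEq this.symm

section ODE

variable {ι : Type*} [Fintype ι]

lemma HasDerivWithinAt.inf_zero_dotProduct_self {x : ℝ → ι → ℝ} {x' : ι → ℝ} {s : Set ℝ}
    {t : ℝ} (hx : HasDerivWithinAt x x' s t) :
    HasDerivWithinAt (fun t => (x t ⊓ 0) ⬝ᵥ (x t ⊓ 0)) (2 * ((x t ⊓ 0) ⬝ᵥ x')) s t := by
  have h := HasDerivWithinAt.fun_sum (u := Finset.univ) fun i _ =>
    (hasDerivAt_min_zero_sq (x t i)).comp_hasDerivWithinAt t (hasDerivWithinAt_pi.1 hx i)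
  have hV : (fun t => (x t ⊓ 0) ⬝ᵥ (x t ⊓ 0)) = fun r => ∑ i, min (x r i) 0 ^ 2 := by
    funext r
    simp only [dotProduct, Pi.inf_apply, Pi.zero_apply, sq]
  have hV' : 2 * ((x t ⊓ 0) ⬝ᵥ x') = ∑ i, 2 * min (x t i) 0 * x' i := by
    simp only [dotProduct, Finset.mul_sum, Pi.inf_apply, Pi.zero_apply, mul_assoc]
  rw [hV, hV']
  exact h

theorem sum_eq_of_hasDerivWithinAt {x v : ℝ → ι → ℝ}
    (hx : ∀ t, 0 ≤ t → HasDerivWithinAt x (v t) (Ici 0) t) (hv : ∀ t, 0 ≤ t → ∑ i, v t i = 0)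
    {t : ℝ} (ht : 0 ≤ t) : ∑ i, x t i = ∑ i, x 0 i := by
  have hsum : ∀ s, 0 ≤ s → HasDerivWithinAt (fun r => ∑ i, x r i) 0 (Ici 0) s := fun s hs => by
    simpa only [hv s hs] using
      HasDerivWithinAt.fun_sum (u := Finset.univ) fun i _ => hasDerivWithinAt_pi.1 (hx s hs) i
  refine constant_of_has_deriv_right_zero (f := fun r => ∑ i, x r i)
    (fun s hs => ?_) (fun s hs => ?_) t ⟨ht, le_rfl⟩
  · exact (hsum s hs.1).continuousWithinAt.mono Icc_subset_Ici_self
  · exact (hsum s hs.1).mono (Ici_subset_Ici.2 hs.1)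

theorem nonneg_of_hasDerivWithinAt_mulVec_of_isMetzler {A : ℝ → Matrix ι ι ℝ}
    {x : ℝ → ι → ℝ} (hA : ∀ t, 0 ≤ t → (A t).IsMetzler) (hAc : ContinuousOn A (Ici 0))
    (hx : ∀ t, 0 ≤ t → HasDerivWithinAt x (A t *ᵥ x t) (Ici 0) t) (h₀ : 0 ≤ x 0)
    {t : ℝ} (ht : 0 ≤ t) : 0 ≤ x t := by
  obtain ⟨C, hC⟩ := isCompact_Icc.exists_bound_of_continuousOn (E := ι → ι → ℝ)
    (hAc.mono (Icc_subset_Ici_self : Icc 0 t ⊆ Ici 0))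
  have hCA : ∀ s ∈ Icc 0 t, ∀ i j, |A s i j| ≤ C := fun s hs i j =>
    ((norm_le_pi_norm (A s i) j).trans (norm_le_pi_norm (A s) i)).trans (hC s hs)
  have hV := fun s (hs : 0 ≤ s) => (hx s hs).inf_zero_dotProduct_self
  have hVt : (x t ⊓ 0) ⬝ᵥ (x t ⊓ 0) ≤ 0 := by
    have := le_gronwallBound_of_liminf_deriv_right_le (δ := 0) (ε := 0)
      (K := 2 * (Fintype.card ι * C))
      (fun s hs => (hV s hs.1).continuousWithinAt.mono Icc_subset_Ici_self)
      (fun s hs r hr => ((hV s hs.1).mono (Ici_subset_Ici.2 hs.1)).liminf_right_slope_le hr)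
      (by simp [inf_eq_right.2 h₀]) (fun s hs => ?_) t ⟨ht, le_rfl⟩
    · rwa [gronwallBound_ε0_δ0] at this
    · have hMetz := (hA s hs.1).inf_zero_dotProduct_mulVec_le (x s)
      have hbound := dotProduct_mulVec_self_le (hCA s (Ico_subset_Icc_self hs)) (x s ⊓ 0)
      linarith
  have hzero : x t ⊓ 0 = 0 :=
    dotProduct_self_eq_zero.1 (le_antisymm hVt (Finset.sum_nonneg fun i _ => mul_self_nonneg _))
  exact inf_eq_right.1 hzero

end ODE

section DensityFeedback

variable {M : ℕ} (xd : Fin M → ℝ) (w : Matrix (Fin M) (Fin M) ℝ)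

lemma Gmat_nonneg_of_ne {w : Matrix (Fin M) (Fin M) ℝ} (hw : ∀ i j, 0 ≤ w i j) (x : Fin M → ℝ)
    {i j : Fin M} (hij : i ≠ j) : 0 ≤ Gmat xd w x i j := by
  rw [Gmat, if_neg hij]
  exact mul_nonneg (hw i j) (add_nonneg (sq_nonneg _) (sq_nonneg _))

lemma sum_Gmat_row (x : Fin M → ℝ) (i : Fin M) : ∑ j, Gmat xd w x i j = 0 := by
  have hoff : ∑ j ∈ Finset.univ.erase i, Gmat xd w x i j
      = ∑ k ∈ Finset.univ.filter (· ≠ i), w i k * (gfun xd x i + gfun xd x k) := by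
    rw [← Finset.filter_ne']
    exact Finset.sum_congr rfl fun j hj => if_neg (Finset.mem_filter.1 hj).2.symm
  rw [← Finset.add_sum_erase _ _ (Finset.mem_univ i), hoff, Gmat, if_pos rfl, neg_add_cancel]

lemma continuous_Gmat : Continuous (Gmat xd w) := by
  refine continuous_pi fun i => continuous_pi fun j => ?_
  unfold Gmat gfun
  split_ifs <;> fun_prop

def closedLoopMatrix (x : Fin M → ℝ) : Matrix (Fin M) (Fin M) ℝ := (Gmat xd w x)ᵀ * Dmat xd

lemma closedLoopMatrix_apply (x : Fin M → ℝ) (i j : Fin M) :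
    closedLoopMatrix xd w x i j = Gmat xd w x j i / xd j := by
  rw [closedLoopMatrix, Dmat, mul_diagonal, transpose_apply, mul_one_div]

lemma isMetzler_closedLoopMatrix {xd : Fin M → ℝ} {w : Matrix (Fin M) (Fin M) ℝ}
    (hxd : ∀ i, 0 ≤ xd i) (hw : ∀ i j, 0 ≤ w i j) (x : Fin M → ℝ) :
    (closedLoopMatrix xd w x).IsMetzler := fun i j hij => by
  rw [closedLoopMatrix_apply]
  exact div_nonneg (Gmat_nonneg_of_ne xd hw x hij.symm) (hxd j)

lemma sum_closedLoopMatrix_col (x : Fin M → ℝ) (j : Fin M) :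
    ∑ i, closedLoopMatrix xd w x i j = 0 := by
  simp only [closedLoopMatrix_apply, ← Finset.sum_div, sum_Gmat_row, zero_div]

lemma continuous_closedLoopMatrix : Continuous (closedLoopMatrix xd w) :=
  (continuous_Gmat xd w).matrix_transpose.matrix_mul continuous_const

end DensityFeedback

theorem simplex_forward_invariant_general
    (M : ℕ) (xd : Fin M → ℝ)
    (hpos : ∀ i, 0 < xd i)
    (w : Matrix (Fin M) (Fin M) ℝ)
    (h01 : ∀ i j, w i j = 0 ∨ w i j = 1)
    (x : ℝ → Fin M → ℝ)
    (hderiv : ∀ t : ℝ, 0 ≤ t →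
      HasDerivWithinAt x ((Gmat xd w (x t))ᵀ.mulVec ((Dmat xd).mulVec (x t)))
        (Set.Ici 0) t)
    (h0 : x 0 ∈ probSimplex M) :
    ∀ t : ℝ, 0 ≤ t → x t ∈ probSimplex M := by
  have hx : ∀ t, 0 ≤ t → HasDerivWithinAt x (closedLoopMatrix xd w (x t) *ᵥ x t) (Ici 0) t := by
    simpa only [closedLoopMatrix, ← mulVec_mulVec] using hderiv
  have hw : ∀ i j, 0 ≤ w i j := fun i j => by rcases h01 i j with h | h <;> simp [h]
  have hxc : ContinuousOn x (Ici 0) := fun t ht => (hx t ht).continuousWithinAt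
  intro t ht
  refine ⟨nonneg_of_hasDerivWithinAt_mulVec_of_isMetzler
    (fun s _ => isMetzler_closedLoopMatrix (fun i => (hpos i).le) hw (x s))
    ((continuous_closedLoopMatrix xd w).comp_continuousOn hxc) hx h0.1 ht, ?_⟩
  rw [sum_eq_of_hasDerivWithinAt hx
    (fun s _ => sum_mulVec_eq_zero (sum_closedLoopMatrix_col xd w (x s)) _) ht]
  exact h0.2

/-- the probability simplex is forward invariant for the closed-loop
dynamics `ẋ = G(x)ᵀ D x`. -/
theorem simplex_forward_invariant
    (M : ℕ) (xd : Fin M → ℝ)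
    (hxd : xd ∈ probSimplex M) (hpos : ∀ i, 0 < xd i)
    (w : Matrix (Fin M) (Fin M) ℝ)
    (h01 : ∀ i j, w i j = 0 ∨ w i j = 1)
    (hsymm : ∀ i j, w i j = w j i) (hdiag : ∀ i, w i i = 0)
    (x : ℝ → Fin M → ℝ)
    (hderiv : ∀ t : ℝ, 0 ≤ t →
      HasDerivWithinAt x ((Gmat xd w (x t))ᵀ.mulVec ((Dmat xd).mulVec (x t)))
        (Set.Ici 0) t)
    (h0 : x 0 ∈ probSimplex M) :
    ∀ t : ℝ, 0 ≤ t → x t ∈ probSimplex M :=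
  simplex_forward_invariant_general M xd hpos w h01 x hderiv h0
end
end

section
/- Let x^d ∈ P(V) be strictly positive, let w ∈ {0,1}^{M×M} be symmetric with zero diagonal such that the undirected graph on {1,...,M} with an edge between i and j whenever w_{ij} = 1 is connected, and let g, G(·), D be as in the density-feedback construction. Then the closed-loop system ẋ = G(x)^T D x is globally asymptotically stable at x^d on the simplex: G(x^d) = 0, and every differentiable solution x : [0,∞) → ℝ^M with x'(t) = G(x(t))^T D x(t) for all t ≥ 0 and x(0) ∈ P(V) satisfies lim_{t→∞} x(t) = x^d. -/
open Matrix Filter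

noncomputable section

/-! With `u_i = x_i / x^d_i`, the field `G(x)ᵀ D x` is a weighted graph Laplacian of `u` with
the symmetric, nonnegative rates `a_ik(x) = w_ik (g_i(x) + g_k(x))`. Hence it conserves the total
mass `∑ x_i`, and along solutions the weighted distance `V(x) = ∑ (x_i - x^d_i)² / x^d_i`
decreases at rate `∑_{i,k} a_ik(x) (u_i - u_k)²`. On the mass-one hyperplane this rate vanishes
only at `x^d`: on an edge either `a_ik(x) > 0` forces `u_i = u_k`, or `a_ik(x) = 0` forces
`u_i = u_k = 1`, and then connectivity makes `u` constant. Since the sublevel sets of `V` are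
compact, the rate is bounded below by a positive constant as long as `V ≥ ε`, so
`V(x(t)) → 0`. -/

open Topology

lemma antitoneOn_Ici_of_hasDerivWithinAt_nonpos {f f' : ℝ → ℝ} {a : ℝ}
    (hf : ∀ t, a ≤ t → HasDerivWithinAt f (f' t) (Set.Ici a) t) (hf' : ∀ t, a ≤ t → f' t ≤ 0) :
    AntitoneOn f (Set.Ici a) := by
  refine antitoneOn_of_hasDerivWithinAt_nonpos (f' := f') (convex_Ici a)
    (fun t ht => (hf t ht).continuousWithinAt) (fun t ht => ?_) (fun t ht => ?_)
  · rw [interior_Ici] at ht ⊢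
    exact (hf t ht.le).mono Set.Ioi_subset_Ici_self
  · rw [interior_Ici] at ht
    exact hf' t ht.le

theorem tendsto_lyapunov_zero {E : Type*} [TopologicalSpace E]
    {V F : E → ℝ} {S : Set E} {x : ℝ → E}
    (hV : Continuous V) (hF : Continuous F) (hS : IsClosed S)
    (hV_compact : ∀ c, IsCompact {p | V p ≤ c}) (hV_nonneg : ∀ p ∈ S, 0 ≤ V p)
    (hF_nonneg : ∀ p ∈ S, 0 ≤ F p) (hF_pos : ∀ p ∈ S, 0 < V p → 0 < F p)
    (hxS : ∀ t, 0 ≤ t → x t ∈ S)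
    (hx : ∀ t, 0 ≤ t → HasDerivWithinAt (fun s => V (x s)) (-F (x t)) (Set.Ici 0) t) :
    Tendsto (fun t => V (x t)) atTop (𝓝 0) := by
  have hanti : AntitoneOn (fun t => V (x t)) (Set.Ici 0) :=
    antitoneOn_Ici_of_hasDerivWithinAt_nonpos hx fun t ht => neg_nonpos.2 (hF_nonneg _ (hxS t ht))
  have hsmall : ∀ ε > 0, ∃ T, 0 ≤ T ∧ V (x T) < ε := by
    intro ε hε
    by_contra! hlarge
    have hK : IsCompact (S ∩ {p | V p ≤ V (x 0)} ∩ {p | ε ≤ V p}) :=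
      ((hV_compact _).inter_left hS).inter_right (isClosed_le continuous_const hV)
    have hxK : ∀ t, 0 ≤ t → x t ∈ S ∩ {p | V p ≤ V (x 0)} ∩ {p | ε ≤ V p} :=
      fun t ht => ⟨⟨hxS t ht, hanti Set.self_mem_Ici ht ht⟩, hlarge t ht⟩
    obtain ⟨p, hpK, hpmin⟩ := hK.exists_isMinOn ⟨x 0, hxK 0 le_rfl⟩ hF.continuousOn
    have hδ : 0 < F p := hF_pos p hpK.1.1 (hε.trans_le hpK.2)
    -- otherwise `V (x t)` would decrease at least linearly with slope `F p > 0` forever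
    have hlin : AntitoneOn (fun t => V (x t) + F p * t) (Set.Ici 0) := by
      refine antitoneOn_Ici_of_hasDerivWithinAt_nonpos
        (fun t ht => (hx t ht).add ((hasDerivWithinAt_id t _).const_mul (F p))) fun t ht => ?_
      have : F p ≤ F (x t) := hpmin (hxK t ht)
      linarith
    have hT : 0 ≤ (V (x 0) + 1) / F p := div_nonneg (by linarith [hV_nonneg _ (hxS 0 le_rfl)]) hδ.le
    have hdrop := hlin Set.self_mem_Ici hT hT
    have hVT := hV_nonneg _ (hxS _ hT)
    simp only [mul_div_cancel₀ _ hδ.ne', mul_zero, add_zero] at hdrop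
    linarith
  refine tendsto_order.2 ⟨fun a ha => eventually_atTop.2 ⟨0, fun t ht => ?_⟩, fun ε hε => ?_⟩
  · exact ha.trans_le (hV_nonneg _ (hxS t ht))
  · obtain ⟨T, hT, hVT⟩ := hsmall ε hε
    exact eventually_atTop.2 ⟨T, fun t ht => (hanti hT (hT.trans ht) ht).trans_lt hVT⟩

section Laplacian

variable {ι : Type*} [Fintype ι] {a : ι → ι → ℝ}

lemma sum_sum_mul_sub_eq_zero (ha : ∀ i k, a i k = a k i) (u : ι → ℝ) :
    ∑ i, ∑ k, a i k * (u k - u i) = 0 := by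
  have hswap : ∑ i, ∑ k, a i k * (u k - u i) = -∑ i, ∑ k, a i k * (u k - u i) := by
    conv_lhs => rw [Finset.sum_comm]
    rw [← Finset.sum_neg_distrib]
    refine Finset.sum_congr rfl fun i _ => ?_
    rw [← Finset.sum_neg_distrib]
    refine Finset.sum_congr rfl fun k _ => ?_
    rw [ha k i]
    ring
  linarith

lemma sum_mul_sum_mul_sub_eq (ha : ∀ i k, a i k = a k i) (u : ι → ℝ) :
    ∑ i, u i * ∑ k, a i k * (u k - u i) = -(∑ i, ∑ k, a i k * (u i - u k) ^ 2) / 2 := by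
  have hswap : ∑ i, u i * ∑ k, a i k * (u k - u i) = ∑ i, ∑ k, a i k * (u k * (u i - u k)) := by
    simp only [Finset.mul_sum]
    rw [Finset.sum_comm]
    refine Finset.sum_congr rfl fun i _ => Finset.sum_congr rfl fun k _ => ?_
    rw [ha k i]
    ring
  have hsum : ∑ i, u i * ∑ k, a i k * (u k - u i) + ∑ i, ∑ k, a i k * (u k * (u i - u k))
      = -∑ i, ∑ k, a i k * (u i - u k) ^ 2 := by
    simp only [Finset.mul_sum, ← Finset.sum_add_distrib, ← Finset.sum_neg_distrib]
    refine Finset.sum_congr rfl fun i _ => Finset.sum_congr rfl fun k _ => ?_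
    ring
  linarith

end Laplacian

lemma Relation.ReflTransGen.eq_of_forall_rel_eq {ι β : Type*} {r : ι → ι → Prop} {f : ι → β}
    (h : ∀ i j, r i j → f i = f j) {i j : ι} (hij : Relation.ReflTransGen r i j) : f i = f j := by
  induction hij with
  | refl => rfl
  | tail _ hjk ih => exact ih.trans (h _ _ hjk)

lemma eq_of_div_eq_div_of_sum_eq {ι : Type*} [Fintype ι] {p q : ι → ℝ} (hq : ∀ i, q i ≠ 0)
    (hq_sum : ∑ i, q i ≠ 0) (hsum : ∑ i, p i = ∑ i, q i) (h : ∀ i j, p i / q i = p j / q j) :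
    p = q := by
  obtain ⟨i₀, -, -⟩ := Finset.exists_ne_zero_of_sum_ne_zero hq_sum
  have hp : ∀ i, p i = p i₀ / q i₀ * q i := fun i => by rw [← h i i₀, div_mul_cancel₀ _ (hq i)]
  have hc : p i₀ / q i₀ = 1 := by
    rw [Finset.sum_congr rfl fun i _ => hp i, ← Finset.mul_sum] at hsum
    exact (mul_eq_right₀ hq_sum).1 hsum
  funext i
  rw [hp i, hc, one_mul]

namespace DensityFeedback

variable {M : ℕ} {xd : Fin M → ℝ} {w : Matrix (Fin M) (Fin M) ℝ}

def edgeRate (xd : Fin M → ℝ) (w : Matrix (Fin M) (Fin M) ℝ) (x : Fin M → ℝ) (i k : Fin M) : ℝ :=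
  w i k * (gfun xd x i + gfun xd x k)

def lyapunov (xd x : Fin M → ℝ) : ℝ := ∑ i, (x i - xd i) ^ 2 / xd i

def dissipation (xd : Fin M → ℝ) (w : Matrix (Fin M) (Fin M) ℝ) (x : Fin M → ℝ) : ℝ :=
  ∑ i, ∑ k, edgeRate xd w x i k * (x i / xd i - x k / xd k) ^ 2

lemma edgeRate_comm (hsymm : ∀ i j, w i j = w j i) (x : Fin M → ℝ) (i k : Fin M) :
    edgeRate xd w x i k = edgeRate xd w x k i := by
  rw [edgeRate, edgeRate, hsymm, add_comm]

lemma edgeRate_nonneg (hw : ∀ i j, 0 ≤ w i j) (x : Fin M → ℝ) (i k : Fin M) :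
    0 ≤ edgeRate xd w x i k :=
  mul_nonneg (hw i k) (add_nonneg (sq_nonneg _) (sq_nonneg _))

lemma Gmat_self : Gmat xd w xd = 0 := by
  ext i j
  simp [Gmat, gfun]

lemma Gmat_apply (x : Fin M → ℝ) (i j : Fin M) :
    Gmat xd w x i j = edgeRate xd w x i j - if i = j then ∑ k, edgeRate xd w x i k else 0 := by
  by_cases hij : i = j
  · subst hij
    rw [← Finset.add_sum_erase _ _ (Finset.mem_univ i), ← Finset.filter_ne']
    simp [Gmat, edgeRate]
  · simp [Gmat, edgeRate, hij]

lemma Dmat_mulVec (x : Fin M → ℝ) : Dmat xd *ᵥ x = fun i => x i / xd i := by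
  ext i
  simp [Dmat, mulVec_diagonal, div_eq_inv_mul]

lemma Gmat_transpose_mulVec (hsymm : ∀ i j, w i j = w j i) (x u : Fin M → ℝ) (i : Fin M) :
    ((Gmat xd w x)ᵀ *ᵥ u) i = ∑ k, edgeRate xd w x i k * (u k - u i) := by
  simp only [mulVec, dotProduct, transpose_apply, Gmat_apply, edgeRate_comm hsymm x _ i, sub_mul,
    ite_mul, zero_mul, Finset.sum_sub_distrib, Finset.sum_ite_eq', Finset.mem_univ, if_true,
    mul_sub, Finset.sum_mul]

lemma sum_closedLoop_eq_zero (hsymm : ∀ i j, w i j = w j i) (x : Fin M → ℝ) :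
    ∑ i, ((Gmat xd w x)ᵀ *ᵥ (Dmat xd *ᵥ x)) i = 0 := by
  simp only [Gmat_transpose_mulVec hsymm]
  exact sum_sum_mul_sub_eq_zero (edgeRate_comm hsymm x) _

lemma lyapunov_deriv_closedLoop (hpos : ∀ i, 0 < xd i) (hsymm : ∀ i j, w i j = w j i)
    (x : Fin M → ℝ) :
    ∑ i, 2 * (x i - xd i) / xd i * ((Gmat xd w x)ᵀ *ᵥ (Dmat xd *ᵥ x)) i = -dissipation xd w x := by
  have hcoef : ∀ i, 2 * (x i - xd i) / xd i = 2 * (x i / xd i) - 2 := fun i => by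
    field_simp [(hpos i).ne']
  simp only [hcoef, Gmat_transpose_mulVec hsymm, Dmat_mulVec, sub_mul, Finset.sum_sub_distrib,
    mul_assoc, ← Finset.mul_sum, sum_mul_sum_mul_sub_eq (edgeRate_comm hsymm x),
    sum_sum_mul_sub_eq_zero (edgeRate_comm hsymm x), dissipation]
  ring

lemma lyapunov_nonneg (hpos : ∀ i, 0 < xd i) (x : Fin M → ℝ) : 0 ≤ lyapunov xd x :=
  Finset.sum_nonneg fun i _ => div_nonneg (sq_nonneg _) (hpos i).le

lemma lyapunov_self : lyapunov xd xd = 0 := by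
  simp [lyapunov]

lemma sq_sub_le_mul_lyapunov (hpos : ∀ i, 0 < xd i) (x : Fin M → ℝ) (i : Fin M) :
    (x i - xd i) ^ 2 ≤ xd i * lyapunov xd x := by
  have hi : (x i - xd i) ^ 2 / xd i ≤ lyapunov xd x :=
    Finset.single_le_sum (f := fun j => (x j - xd j) ^ 2 / xd j)
      (fun j _ => div_nonneg (sq_nonneg _) (hpos j).le) (Finset.mem_univ i)
  rwa [div_le_iff₀' (hpos i)] at hi

lemma continuous_lyapunov : Continuous (lyapunov xd) := by
  unfold lyapunov
  fun_prop

lemma continuous_dissipation : Continuous (dissipation xd w) := by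
  unfold dissipation edgeRate gfun
  fun_prop

lemma isCompact_lyapunov_le (hpos : ∀ i, 0 < xd i) (c : ℝ) :
    IsCompact {x | lyapunov xd x ≤ c} := by
  refine (isCompact_univ_pi fun i => isCompact_Icc
    (a := xd i - √(xd i * c)) (b := xd i + √(xd i * c))).of_isClosed_subset
    (isClosed_le continuous_lyapunov continuous_const) fun x hx i _ => ?_
  have hi := Real.abs_le_sqrt
    ((sq_sub_le_mul_lyapunov hpos x i).trans (mul_le_mul_of_nonneg_left hx (hpos i).le))
  rw [abs_le] at hi
  constructor <;> linarith

lemma tendsto_of_tendsto_lyapunov (hpos : ∀ i, 0 < xd i) {α : Type*} {l : Filter α}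
    {x : α → Fin M → ℝ} (hx : Tendsto (fun t => lyapunov xd (x t)) l (𝓝 0)) :
    Tendsto x l (𝓝 xd) := by
  refine tendsto_pi_nhds.2 fun i => tendsto_sub_nhds_zero_iff.1 (squeeze_zero_norm
    (fun t => Real.abs_le_sqrt (sq_sub_le_mul_lyapunov hpos (x t) i)) ?_)
  simpa using (hx.const_mul (xd i)).sqrt

lemma dissipation_nonneg (hw : ∀ i j, 0 ≤ w i j) (x : Fin M → ℝ) : 0 ≤ dissipation xd w x :=
  Finset.sum_nonneg fun i _ => Finset.sum_nonneg fun k _ =>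
    mul_nonneg (edgeRate_nonneg hw x i k) (sq_nonneg _)

lemma div_eq_div_of_dissipation_eq_zero (hw : ∀ i j, 0 ≤ w i j) (hpos : ∀ i, 0 < xd i)
    {x : Fin M → ℝ} (hx : dissipation xd w x = 0) {i k : Fin M} (hik : w i k = 1) :
    x i / xd i = x k / xd k := by
  have hterm : edgeRate xd w x i k * (x i / xd i - x k / xd k) ^ 2 = 0 := by
    have hnonneg : ∀ i k, 0 ≤ edgeRate xd w x i k * (x i / xd i - x k / xd k) ^ 2 :=
      fun i k => mul_nonneg (edgeRate_nonneg hw x i k) (sq_nonneg _)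
    rw [dissipation, Finset.sum_eq_zero_iff_of_nonneg fun i _ =>
      Finset.sum_nonneg fun k _ => hnonneg i k] at hx
    exact (Finset.sum_eq_zero_iff_of_nonneg fun k _ => hnonneg i k).1
      (hx i (Finset.mem_univ i)) k (Finset.mem_univ k)
  rw [edgeRate, hik, one_mul, gfun, gfun] at hterm
  rcases mul_eq_zero.1 hterm with hrate | hsq
  · have hxi : x i = xd i := by nlinarith [sq_nonneg (x i - xd i), sq_nonneg (x k - xd k)]
    have hxk : x k = xd k := by nlinarith [sq_nonneg (x i - xd i), sq_nonneg (x k - xd k)]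
    rw [hxi, hxk, div_self (hpos i).ne', div_self (hpos k).ne']
  · exact sub_eq_zero.1 (pow_eq_zero_iff two_ne_zero |>.1 hsq)

lemma eq_of_dissipation_eq_zero (hw : ∀ i j, 0 ≤ w i j) (hpos : ∀ i, 0 < xd i)
    (hconn : ∀ i j : Fin M, Relation.ReflTransGen (fun a b => w a b = 1) i j)
    (hxd : ∑ i, xd i = 1) {x : Fin M → ℝ} (hx_sum : ∑ i, x i = 1)
    (hx : dissipation xd w x = 0) : x = xd :=
  eq_of_div_eq_div_of_sum_eq (fun i => (hpos i).ne') (by simp [hxd]) (hx_sum.trans hxd.symm)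
    fun i j => (hconn i j).eq_of_forall_rel_eq (f := fun i => x i / xd i) fun _ _ =>
      div_eq_div_of_dissipation_eq_zero hw hpos hx

lemma dissipation_pos (hw : ∀ i j, 0 ≤ w i j) (hpos : ∀ i, 0 < xd i)
    (hconn : ∀ i j : Fin M, Relation.ReflTransGen (fun a b => w a b = 1) i j)
    (hxd : ∑ i, xd i = 1) {x : Fin M → ℝ} (hx_sum : ∑ i, x i = 1) (hx : 0 < lyapunov xd x) :
    0 < dissipation xd w x := by
  refine (dissipation_nonneg hw x).lt_of_ne fun h => hx.ne' ?_
  rw [eq_of_dissipation_eq_zero hw hpos hconn hxd hx_sum h.symm, lyapunov_self]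

lemma hasDerivWithinAt_lyapunov {x : ℝ → Fin M → ℝ} {x' : Fin M → ℝ} {s : Set ℝ} {t : ℝ}
    (hx : HasDerivWithinAt x x' s t) :
    HasDerivWithinAt (fun τ => lyapunov xd (x τ)) (∑ i, 2 * (x t i - xd i) / xd i * x' i) s t := by
  unfold lyapunov
  refine HasDerivWithinAt.fun_sum fun i _ => ?_
  exact ((((hasDerivWithinAt_pi.1 hx i).sub_const (xd i)).fun_pow 2).div_const (xd i)).congr_deriv
    (by ring)

lemma sum_eq_of_hasDerivWithinAt_closedLoop (hsymm : ∀ i j, w i j = w j i) {x : ℝ → Fin M → ℝ}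
    (hx : ∀ t, 0 ≤ t →
      HasDerivWithinAt x ((Gmat xd w (x t))ᵀ *ᵥ (Dmat xd *ᵥ x t)) (Set.Ici 0) t)
    {t : ℝ} (ht : 0 ≤ t) : ∑ i, x t i = ∑ i, x 0 i := by
  have hsum : ∀ s, 0 ≤ s → HasDerivWithinAt (fun τ => ∑ i, x τ i) 0 (Set.Ici 0) s := fun s hs => by
    have := HasDerivWithinAt.fun_sum (u := Finset.univ) fun i _ => hasDerivWithinAt_pi.1 (hx s hs) i
    rwa [sum_closedLoop_eq_zero hsymm] at this
  exact constant_of_has_deriv_right_zero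
    (fun s hs => (hsum s hs.1).continuousWithinAt.mono Set.Icc_subset_Ici_self)
    (fun s hs => (hsum s hs.1).mono (Set.Ici_subset_Ici.2 hs.1)) t ⟨ht, le_rfl⟩

end DensityFeedback

open DensityFeedback in
theorem closed_loop_global_asymptotic_stability_general
    (M : ℕ) (xd : Fin M → ℝ)
    (hxd : xd ∈ probSimplex M) (hpos : ∀ i, 0 < xd i)
    (w : Matrix (Fin M) (Fin M) ℝ)
    (h01 : ∀ i j, w i j = 0 ∨ w i j = 1)
    (hsymm : ∀ i j, w i j = w j i)
    (hconn : ∀ i j : Fin M, Relation.ReflTransGen (fun a b => w a b = 1) i j) :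
    Gmat xd w xd = 0 ∧
    ∀ x : ℝ → Fin M → ℝ,
      (∀ t : ℝ, 0 ≤ t →
        HasDerivWithinAt x ((Gmat xd w (x t))ᵀ.mulVec ((Dmat xd).mulVec (x t)))
          (Set.Ici 0) t) →
      x 0 ∈ probSimplex M →
      Tendsto x atTop (nhds xd) := by
  refine ⟨Gmat_self, fun x hx hx0 => tendsto_of_tendsto_lyapunov hpos ?_⟩
  have hw : ∀ i j, 0 ≤ w i j := fun i j => (h01 i j).elim (·.ge) fun h => h ▸ zero_le_one
  have hmass : ∀ t, 0 ≤ t → ∑ i, x t i = 1 := fun t ht =>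
    (sum_eq_of_hasDerivWithinAt_closedLoop hsymm hx ht).trans hx0.2
  refine tendsto_lyapunov_zero (S := {p : Fin M → ℝ | ∑ i, p i = 1}) continuous_lyapunov
    continuous_dissipation (isClosed_eq (by fun_prop) continuous_const) (isCompact_lyapunov_le hpos)
    (fun p _ => lyapunov_nonneg hpos p) (fun p _ => dissipation_nonneg hw p)
    (fun p hp => dissipation_pos hw hpos hconn hxd.2 hp) hmass fun t ht => ?_
  rw [← lyapunov_deriv_closedLoop hpos hsymm]
  exact hasDerivWithinAt_lyapunov (hx t ht)

/-- for a connected bidirected graph encoded by the 0/1 symmetric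
adjacency matrix `w`, the closed-loop system `ẋ = G(x)ᵀ D x` is globally
asymptotically stable at `x^d` on the simplex: the control vanishes at equilibrium
(`G(x^d) = 0`) and every solution starting in `P(V)` converges to `x^d`. -/
theorem closed_loop_global_asymptotic_stability
    (M : ℕ) (xd : Fin M → ℝ)
    (hxd : xd ∈ probSimplex M) (hpos : ∀ i, 0 < xd i)
    (w : Matrix (Fin M) (Fin M) ℝ)
    (h01 : ∀ i j, w i j = 0 ∨ w i j = 1)
    (hsymm : ∀ i j, w i j = w j i) (hdiag : ∀ i, w i i = 0)
    (hconn : ∀ i j : Fin M, Relation.ReflTransGen (fun a b => w a b = 1) i j) :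
    Gmat xd w xd = 0 ∧
    ∀ x : ℝ → Fin M → ℝ,
      (∀ t : ℝ, 0 ≤ t →
        HasDerivWithinAt x ((Gmat xd w (x t))ᵀ.mulVec ((Dmat xd).mulVec (x t)))
          (Set.Ici 0) t) →
      x 0 ∈ probSimplex M →
      Tendsto x atTop (nhds xd) :=
  closed_loop_global_asymptotic_stability_general M xd hxd hpos w h01 hsymm hconn
end
end
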